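/- arXiv:1706.09914 — 3 statements merged into one kernel-verified Lean document; each statement's English description precedes it below -/
import Mathlib

section
/- Fix T > 0 and π₀ ∈ 𝒮. There exists a continuous map π : [0,T] → ℓ¹ with π(t) ∈ 𝒮 for all t that satisfies the integral equation π(t) = π₀ + ∫₀^t F(π(s)) ds (Bochner integral in ℓ¹) for every t ∈ [0,T]. Moreover, if π and π̃ are two continuous maps from [0,T] to 𝒮 ⊂ ℓ¹ both satisfying this integral equation with π(0) = π̃(0) = π₀, then π(t) = π̃(t) for all t ∈ [0,T]. -/
noncomputable section

open scoped BigOperators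

/-- Tail sum `Σ_{m=j+1}^∞ r m`. -/
def tsumTail (r : ℕ → ℝ) (j : ℕ) : ℝ := ∑' m : ℕ, r (j + 1 + m)

/-- Membership in `𝒮`: nonnegative summable sequences with total mass 1. -/
def memS (r : ℕ → ℝ) : Prop := (∀ j, 0 ≤ r j) ∧ Summable r ∧ ∑' j, r j = 1

/-- The function `ζ̄(j, r)`. -/
def zbar (L k : ℕ) (j : ℕ) (r : ℕ → ℝ) : ℝ :=
  ∑ i₁ ∈ Finset.range k,
    ((∑ m ∈ Finset.range j, r m) ^ i₁ / (i₁.factorial : ℝ)) *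
      ∑ i₂ ∈ Finset.Icc 1 (L - i₁),
        (min i₂ (k - i₁) : ℝ) * (r j ^ i₂ / (i₂.factorial : ℝ)) *
          ((tsumTail r j) ^ (L - i₁ - i₂) / ((L - i₁ - i₂).factorial : ℝ))

/-- The drift map `F`, defined coordinatewise:
`F_j(r) = λ·L!·(ζ̄(j−1,r) − ζ̄(j,r)) + k·(r_{j+1} − r_j)` for `j ≥ 1` and
`F_0(r) = −λ·L!·ζ̄(0,r) + k·r_1`. -/
def Fmap (L k : ℕ) (lam : ℝ) (r : ℕ → ℝ) : ℕ → ℝ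
  | 0 => -(lam * (L.factorial : ℝ)) * zbar L k 0 r + (k : ℝ) * r 1
  | (j + 1) => lam * (L.factorial : ℝ) * (zbar L k j r - zbar L k (j + 1) r)
      + (k : ℝ) * (r (j + 2) - r (j + 1))

instance : Fact ((1 : ENNReal) ≤ 1) := ⟨le_rfl⟩

/-- pow difference bound on [0,1] -/
lemma pow_diff_le {a b : ℝ} (ha0 : 0 ≤ a) (ha1 : a ≤ 1) (hb0 : 0 ≤ b) (hb1 : b ≤ 1) (n : ℕ) :
    |a ^ n - b ^ n| ≤ n * |a - b| := by
  induction n with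
  | zero => simp
  | succ n ih =>
    have : a ^ (n+1) - b ^ (n+1) = a * (a ^ n - b ^ n) + b ^ n * (a - b) := by ring
    rw [this]
    calc |a * (a ^ n - b ^ n) + b ^ n * (a - b)|
        ≤ |a * (a ^ n - b ^ n)| + |b ^ n * (a - b)| := abs_add_le _ _
      _ = a * |a ^ n - b ^ n| + b ^ n * |a - b| := by
          rw [abs_mul, abs_mul, abs_of_nonneg ha0, abs_of_nonneg (pow_nonneg hb0 n)]
      _ ≤ 1 * (n * |a - b|) + 1 * |a - b| := by
          have h1 : a * |a ^ n - b ^ n| ≤ 1 * (n * |a - b|) := by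
            rw [one_mul]
            exact (mul_le_mul ha1 ih (abs_nonneg _) zero_le_one).trans (by rw [one_mul])
          have h2 : b ^ n * |a - b| ≤ 1 * |a - b| := by
            gcongr; exact pow_le_one₀ hb0 hb1
          linarith
      _ = ((n : ℝ) + 1) * |a - b| := by ring
      _ = ((n + 1 : ℕ) : ℝ) * |a - b| := by push_cast; ring


/-- membership in the enlarged invariant set K -/
def memK (q : ℕ → ℝ) : Prop := (∀ j, 0 ≤ q j) ∧ Summable q ∧ ∑' j, q j ≤ 1

namespace memK
variable {q : ℕ → ℝ}

lemma nonneg (h : memK q) (j : ℕ) : 0 ≤ q j := h.1 j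
lemma summable (h : memK q) : Summable q := h.2.1
lemma tsum_le (h : memK q) : ∑' j, q j ≤ 1 := h.2.2
lemma coord_le_one (h : memK q) (j : ℕ) : q j ≤ 1 :=
  (Summable.le_tsum h.summable j (fun m _ => h.nonneg m)).trans h.tsum_le
lemma partial_nonneg (h : memK q) (j : ℕ) : 0 ≤ ∑ m ∈ Finset.range j, q m :=
  Finset.sum_nonneg fun m _ => h.nonneg m
lemma partial_le_one (h : memK q) (j : ℕ) : ∑ m ∈ Finset.range j, q m ≤ 1 :=
  (Summable.sum_le_tsum _ (fun m _ => h.nonneg m) h.summable).trans h.tsum_le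
lemma summable_tail (h : memK q) (j : ℕ) : Summable fun m => q (j + 1 + m) := by
  have := (summable_nat_add_iff (j+1)).2 h.summable
  exact this.congr fun m => by rw [add_comm]
lemma tail_nonneg (h : memK q) (j : ℕ) : 0 ≤ tsumTail q j :=
  tsum_nonneg fun m => h.nonneg _
lemma tail_le_one (h : memK q) (j : ℕ) : tsumTail q j ≤ 1 := by
  refine le_trans ?_ h.tsum_le
  exact Summable.tsum_le_tsum_of_inj (fun m => j + 1 + m) (fun a b hab => by dsimp at hab; omega)
    (fun c _ => h.nonneg c) (fun m => le_refl _) (h.summable_tail j) h.summable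

end memK

section zbarLemmas
variable {L k : ℕ} {q : ℕ → ℝ}

lemma min_cast_nonneg {i₁ i₂ : ℕ} (hi₁ : i₁ ∈ Finset.range k) :
    (0:ℝ) ≤ min (i₂:ℝ) ((k:ℝ) - (i₁:ℝ)) := by
  have := Finset.mem_range.1 hi₁
  have h1 : (i₁:ℝ) + 1 ≤ (k:ℝ) := by exact_mod_cast this
  exact le_min (by positivity) (by linarith)

lemma zbar_term_nonneg (h : memK q) (j i₁ : ℕ) (hi₁ : i₁ ∈ Finset.range k) (i₂ : ℕ) :
    0 ≤ (min i₂ (k - i₁) : ℝ) * (q j ^ i₂ / (i₂.factorial : ℝ)) *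
          ((tsumTail q j) ^ (L - i₁ - i₂) / ((L - i₁ - i₂).factorial : ℝ)) := by
  have h1 := min_cast_nonneg (i₂ := i₂) hi₁
  have h2 := h.nonneg j
  have h3 := h.tail_nonneg j
  positivity

lemma zbar_nonneg (h : memK q) (j : ℕ) : 0 ≤ zbar L k j q := by
  refine Finset.sum_nonneg fun i₁ hi₁ => mul_nonneg ?_ ?_
  · have := h.partial_nonneg j
    positivity
  · exact Finset.sum_nonneg fun i₂ _ => zbar_term_nonneg h j i₁ hi₁ i₂

lemma zbar_of_coord_zero (j : ℕ) (h : q j = 0) : zbar L k j q = 0 := by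
  unfold zbar
  refine Finset.sum_eq_zero fun i₁ _ => ?_
  rw [mul_eq_zero]; right
  refine Finset.sum_eq_zero fun i₂ hi₂ => ?_
  have h1 : 1 ≤ i₂ := (Finset.mem_Icc.1 hi₂).1
  rw [h, zero_pow (by omega), zero_div, mul_zero, zero_mul]


lemma fact_one_le (i : ℕ) : (1:ℝ) ≤ (i.factorial : ℝ) := Nat.one_le_cast.2 i.factorial_pos

lemma pow_div_fact_le_one {a : ℝ} (h0 : 0 ≤ a) (h1 : a ≤ 1) (n i : ℕ) :
    a ^ n / (i.factorial : ℝ) ≤ 1 := by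
  have := fact_one_le i
  calc a ^ n / (i.factorial : ℝ) ≤ a ^ n / 1 := by
        apply div_le_div_of_nonneg_left (by positivity) one_pos ?_ |>.trans ?_ <;> simp [this]
    _ ≤ 1 := by rw [div_one]; exact pow_le_one₀ h0 h1

lemma pow_div_fact_le_self {a : ℝ} (h0 : 0 ≤ a) (h1 : a ≤ 1) {n : ℕ} (hn : 1 ≤ n) (i : ℕ) :
    a ^ n / (i.factorial : ℝ) ≤ a := by
  have hf := fact_one_le i
  calc a ^ n / (i.factorial : ℝ) ≤ a ^ n := by
        rw [div_le_iff₀ (by linarith)]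
        nlinarith [pow_nonneg h0 n]
    _ ≤ a ^ 1 := pow_le_pow_of_le_one h0 h1 hn
    _ = a := pow_one a

/-- inner sum bound -/
lemma inner_sum_le (hkL : k ≤ L) (hq : memK q) (j i₁ : ℕ) (hi₁ : i₁ ∈ Finset.range k) :
    ∑ i₂ ∈ Finset.Icc 1 (L - i₁),
        (min i₂ (k - i₁) : ℝ) * (q j ^ i₂ / (i₂.factorial : ℝ)) *
          ((tsumTail q j) ^ (L - i₁ - i₂) / ((L - i₁ - i₂).factorial : ℝ))
      ≤ (L:ℝ)^2 * q j := by
  have hbd : ∀ i₂ ∈ Finset.Icc 1 (L - i₁),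
      (min i₂ (k - i₁) : ℝ) * (q j ^ i₂ / (i₂.factorial : ℝ)) *
          ((tsumTail q j) ^ (L - i₁ - i₂) / ((L - i₁ - i₂).factorial : ℝ))
        ≤ (L:ℝ) * q j := by
    intro i₂ hi₂
    have h1 : 1 ≤ i₂ := (Finset.mem_Icc.1 hi₂).1
    have hm : (min i₂ (k - i₁) : ℝ) ≤ (L:ℝ) := by
      refine (min_le_left _ _).trans ?_
      have : i₂ ≤ L := le_trans (Finset.mem_Icc.1 hi₂).2 (Nat.sub_le _ _)
      exact_mod_cast this
    have hm0 := min_cast_nonneg (i₂ := i₂) hi₁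
    have hY : q j ^ i₂ / (i₂.factorial : ℝ) ≤ q j :=
      pow_div_fact_le_self (hq.nonneg j) (hq.coord_le_one j) h1 _
    have hY0 : 0 ≤ q j ^ i₂ / (i₂.factorial : ℝ) := by
      have := hq.nonneg j; positivity
    have hZ : (tsumTail q j) ^ (L - i₁ - i₂) / ((L - i₁ - i₂).factorial : ℝ) ≤ 1 :=
      pow_div_fact_le_one (hq.tail_nonneg j) (hq.tail_le_one j) _ _
    have hZ0 : 0 ≤ (tsumTail q j) ^ (L - i₁ - i₂) / ((L - i₁ - i₂).factorial : ℝ) := by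
      have := hq.tail_nonneg j; positivity
    calc (min i₂ (k - i₁) : ℝ) * (q j ^ i₂ / (i₂.factorial : ℝ)) *
          ((tsumTail q j) ^ (L - i₁ - i₂) / ((L - i₁ - i₂).factorial : ℝ))
        ≤ (min i₂ (k - i₁) : ℝ) * (q j ^ i₂ / (i₂.factorial : ℝ)) * 1 := by
          exact mul_le_mul_of_nonneg_left hZ (mul_nonneg hm0 hY0)
      _ = (min i₂ (k - i₁) : ℝ) * (q j ^ i₂ / (i₂.factorial : ℝ)) := mul_one _
      _ ≤ (L:ℝ) * q j := mul_le_mul hm hY hY0 (by positivity)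
  calc (∑ i₂ ∈ Finset.Icc 1 (L - i₁), _) ≤ ∑ _i₂ ∈ Finset.Icc 1 (L - i₁), (L:ℝ) * q j :=
        Finset.sum_le_sum hbd
    _ = ((Finset.Icc 1 (L - i₁)).card : ℝ) * ((L:ℝ) * q j) := by
        rw [Finset.sum_const, nsmul_eq_mul]
    _ ≤ (L:ℝ) * ((L:ℝ) * q j) := by
        have : ((Finset.Icc 1 (L - i₁)).card : ℝ) ≤ (L:ℝ) := by
          rw [Nat.card_Icc]; push_cast [Nat.cast_sub]
          have : L - i₁ + 1 - 1 ≤ L := by omega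
          exact_mod_cast this
        have h0 : 0 ≤ (L:ℝ) * q j := mul_nonneg (by positivity) (hq.nonneg j)
        exact mul_le_mul_of_nonneg_right this h0
    _ = (L:ℝ)^2 * q j := by ring

lemma zbar_le (hkL : k ≤ L) (hq : memK q) (j : ℕ) :
    zbar L k j q ≤ (k:ℝ) * (L:ℝ)^2 * q j := by
  unfold zbar
  have hbd : ∀ i₁ ∈ Finset.range k,
      ((∑ m ∈ Finset.range j, q m) ^ i₁ / (i₁.factorial : ℝ)) *
      (∑ i₂ ∈ Finset.Icc 1 (L - i₁),
        (min i₂ (k - i₁) : ℝ) * (q j ^ i₂ / (i₂.factorial : ℝ)) *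
          ((tsumTail q j) ^ (L - i₁ - i₂) / ((L - i₁ - i₂).factorial : ℝ)))
        ≤ (L:ℝ)^2 * q j := by
    intro i₁ hi₁
    have hX : (∑ m ∈ Finset.range j, q m) ^ i₁ / (i₁.factorial : ℝ) ≤ 1 :=
      pow_div_fact_le_one (hq.partial_nonneg j) (hq.partial_le_one j) _ _
    have hX0 : 0 ≤ (∑ m ∈ Finset.range j, q m) ^ i₁ / (i₁.factorial : ℝ) := by
      have := hq.partial_nonneg j; positivity
    have hS0 : 0 ≤ ∑ i₂ ∈ Finset.Icc 1 (L - i₁),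
        (min i₂ (k - i₁) : ℝ) * (q j ^ i₂ / (i₂.factorial : ℝ)) *
          ((tsumTail q j) ^ (L - i₁ - i₂) / ((L - i₁ - i₂).factorial : ℝ)) :=
      Finset.sum_nonneg fun i₂ _ => zbar_term_nonneg hq j i₁ hi₁ i₂
    calc _ ≤ 1 * (∑ i₂ ∈ Finset.Icc 1 (L - i₁),
        (min i₂ (k - i₁) : ℝ) * (q j ^ i₂ / (i₂.factorial : ℝ)) *
          ((tsumTail q j) ^ (L - i₁ - i₂) / ((L - i₁ - i₂).factorial : ℝ))) :=
          mul_le_mul_of_nonneg_right hX hS0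
      _ = _ := one_mul _
      _ ≤ (L:ℝ)^2 * q j := inner_sum_le hkL hq j i₁ hi₁
  calc (∑ i₁ ∈ Finset.range k, _) ≤ ∑ _i₁ ∈ Finset.range k, (L:ℝ)^2 * q j :=
        Finset.sum_le_sum hbd
    _ = (k:ℝ) * ((L:ℝ)^2 * q j) := by rw [Finset.sum_const, nsmul_eq_mul, Finset.card_range]
    _ = (k:ℝ) * (L:ℝ)^2 * q j := by ring


variable {q' : ℕ → ℝ}

lemma abs_partial_diff_le (hq : Summable q) (hq' : Summable q') (j : ℕ) :
    |(∑ m ∈ Finset.range j, q m) - ∑ m ∈ Finset.range j, q' m| ≤ ∑' i, |q i - q' i| := by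
  rw [← Finset.sum_sub_distrib]
  calc |∑ m ∈ Finset.range j, (q m - q' m)| ≤ ∑ m ∈ Finset.range j, |q m - q' m| :=
        Finset.abs_sum_le_sum_abs _ _
    _ ≤ ∑' i, |q i - q' i| :=
        Summable.sum_le_tsum _ (fun m _ => abs_nonneg _) ((hq.sub hq').abs)

lemma abs_tail_diff_le (hq : memK q) (hq' : memK q') (j : ℕ) :
    |tsumTail q j - tsumTail q' j| ≤ ∑' i, |q i - q' i| := by
  have h1 := hq.summable_tail j
  have h2 := hq'.summable_tail j
  have heq : tsumTail q j - tsumTail q' j = ∑' m, (q (j+1+m) - q' (j+1+m)) :=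
    (Summable.tsum_sub h1 h2).symm
  rw [heq]
  have h3 : Summable (fun m => |q (j+1+m) - q' (j+1+m)|) := (h1.sub h2).abs
  have h4 : Summable (fun i => |q i - q' i|) := (hq.summable.sub hq'.summable).abs
  calc |∑' m, (q (j+1+m) - q' (j+1+m))| ≤ ∑' m, |q (j+1+m) - q' (j+1+m)| := by
        simpa [Real.norm_eq_abs] using norm_tsum_le_tsum_norm (f := fun m => q (j+1+m) - q' (j+1+m)) h3
    _ ≤ ∑' i, |q i - q' i| :=
        Summable.tsum_le_tsum_of_inj (fun m => j + 1 + m) (fun a b hab => by dsimp at hab; omega)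
          (fun c _ => abs_nonneg _) (fun m => le_refl _) h3 h4

lemma abs_coord_diff_le (hq : Summable q) (hq' : Summable q') (j : ℕ) :
    |q j - q' j| ≤ ∑' i, |q i - q' i| :=
  Summable.le_tsum ((hq.sub hq').abs) j (fun m _ => abs_nonneg _)

lemma abs_mul_sub_mul {a b a' b' : ℝ} (hb : 0 ≤ b) (ha' : 0 ≤ a') :
    |a * b - a' * b'| ≤ |a - a'| * b + a' * |b - b'| := by
  have h : a * b - a' * b' = (a - a') * b + a' * (b - b') := by ring
  rw [h]
  refine (abs_add_le _ _).trans ?_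
  rw [abs_mul, abs_mul, abs_of_nonneg hb, abs_of_nonneg ha']

lemma abs_pow_div_fact_sub {a b : ℝ} (ha0 : 0 ≤ a) (ha1 : a ≤ 1) (hb0 : 0 ≤ b) (hb1 : b ≤ 1)
    (n i : ℕ) : |a ^ n / (i.factorial : ℝ) - b ^ n / (i.factorial : ℝ)| ≤ n * |a - b| := by
  rw [div_sub_div_same, abs_div]
  refine le_trans ?_ (pow_diff_le ha0 ha1 hb0 hb1 n)
  refine (div_le_self (abs_nonneg _) ?_)
  exact le_trans (fact_one_le i) (le_abs_self _)

lemma zbar_diff (hk1 : 1 ≤ k) (hkL : k ≤ L) (hq : memK q) (hq' : memK q') (j : ℕ) :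
    |zbar L k j q - zbar L k j q'| ≤ (k:ℝ) * (L:ℝ)^3 *
      (q j * (∑' i, |q i - q' i|) + |q j - q' j| + q' j * (∑' i, |q i - q' i|)) := by
  set D := ∑' i, |q i - q' i| with hD
  have hD0 : 0 ≤ D := tsum_nonneg fun i => abs_nonneg _
  have hAD := abs_partial_diff_le hq.summable hq'.summable j
  have htD := abs_tail_diff_le hq hq' j
  set A := ∑ m ∈ Finset.range j, q m
  set A' := ∑ m ∈ Finset.range j, q' m
  set t := tsumTail q j
  set t' := tsumTail q' j
  have hL1 : (1:ℝ) ≤ (L:ℝ) := by exact_mod_cast le_trans hk1 hkL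
  have hdjD := abs_coord_diff_le hq.summable hq'.summable j
  have hdj0 : (0:ℝ) ≤ |q j - q' j| := abs_nonneg _
  have hqj0 := hq.nonneg j
  have hq'j0 := hq'.nonneg j
  set dj := |q j - q' j| with hdjdef
  set R := q j * D + dj + q' j * D with hR
  have hR0 : 0 ≤ R := by positivity
  unfold zbar
  rw [← Finset.sum_sub_distrib]
  refine le_trans (Finset.abs_sum_le_sum_abs _ _) ?_
  have hterm : ∀ i₁ ∈ Finset.range k,
      |((A) ^ i₁ / (i₁.factorial : ℝ)) *
        (∑ i₂ ∈ Finset.Icc 1 (L - i₁),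
          (min i₂ (k - i₁) : ℝ) * (q j ^ i₂ / (i₂.factorial : ℝ)) *
            ((t) ^ (L - i₁ - i₂) / ((L - i₁ - i₂).factorial : ℝ))) -
       ((A') ^ i₁ / (i₁.factorial : ℝ)) *
        (∑ i₂ ∈ Finset.Icc 1 (L - i₁),
          (min i₂ (k - i₁) : ℝ) * (q' j ^ i₂ / (i₂.factorial : ℝ)) *
            ((t') ^ (L - i₁ - i₂) / ((L - i₁ - i₂).factorial : ℝ)))|
      ≤ (L:ℝ)^3 * R := by
    intro i₁ hi₁
    have hi₁L : (i₁ : ℝ) ≤ (L:ℝ) := by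
      have : i₁ ≤ L := le_trans (Nat.le_of_lt_succ (Nat.lt_succ_of_lt (Finset.mem_range.1 hi₁))) hkL
      exact_mod_cast this
    set S := ∑ i₂ ∈ Finset.Icc 1 (L - i₁),
          (min i₂ (k - i₁) : ℝ) * (q j ^ i₂ / (i₂.factorial : ℝ)) *
            ((t) ^ (L - i₁ - i₂) / ((L - i₁ - i₂).factorial : ℝ)) with hSdef
    set S' := ∑ i₂ ∈ Finset.Icc 1 (L - i₁),
          (min i₂ (k - i₁) : ℝ) * (q' j ^ i₂ / (i₂.factorial : ℝ)) *
            ((t') ^ (L - i₁ - i₂) / ((L - i₁ - i₂).factorial : ℝ)) with hS'def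
    have hS0 : 0 ≤ S := Finset.sum_nonneg fun i₂ _ => zbar_term_nonneg hq j i₁ hi₁ i₂
    have hSle : S ≤ (L:ℝ)^2 * q j := inner_sum_le hkL hq j i₁ hi₁
    have hX'0 : 0 ≤ (A') ^ i₁ / (i₁.factorial : ℝ) := by
      have := hq'.partial_nonneg j; positivity
    have hX'1 : (A') ^ i₁ / (i₁.factorial : ℝ) ≤ 1 :=
      pow_div_fact_le_one (hq'.partial_nonneg j) (hq'.partial_le_one j) _ _
    have hXd : |(A) ^ i₁ / (i₁.factorial : ℝ) - (A') ^ i₁ / (i₁.factorial : ℝ)| ≤ (L:ℝ) * D := by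
      refine le_trans (abs_pow_div_fact_sub (hq.partial_nonneg j) (hq.partial_le_one j)
        (hq'.partial_nonneg j) (hq'.partial_le_one j) i₁ i₁) ?_
      exact mul_le_mul hi₁L hAD (abs_nonneg _) (by linarith)
    have hSd : |S - S'| ≤ (L:ℝ)^3 * (dj + q' j * D) := by
      rw [hSdef, hS'def, ← Finset.sum_sub_distrib]
      refine le_trans (Finset.abs_sum_le_sum_abs _ _) ?_
      have hterm2 : ∀ i₂ ∈ Finset.Icc 1 (L - i₁),
          |(min i₂ (k - i₁) : ℝ) * (q j ^ i₂ / (i₂.factorial : ℝ)) *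
            ((t) ^ (L - i₁ - i₂) / ((L - i₁ - i₂).factorial : ℝ)) -
           (min i₂ (k - i₁) : ℝ) * (q' j ^ i₂ / (i₂.factorial : ℝ)) *
            ((t') ^ (L - i₁ - i₂) / ((L - i₁ - i₂).factorial : ℝ))|
          ≤ (L:ℝ)^2 * (dj + q' j * D) := by
        intro i₂ hi₂
        have h1 : 1 ≤ i₂ := (Finset.mem_Icc.1 hi₂).1
        have hi₂L : (i₂ : ℝ) ≤ (L:ℝ) := by
          have : i₂ ≤ L := le_trans (Finset.mem_Icc.1 hi₂).2 (Nat.sub_le _ _)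
          exact_mod_cast this
        have heL : ((L - i₁ - i₂ : ℕ) : ℝ) ≤ (L:ℝ) := by
          have : L - i₁ - i₂ ≤ L := by omega
          exact_mod_cast this
        have hm0 := min_cast_nonneg (i₂ := i₂) hi₁
        have hmL : (min i₂ (k - i₁) : ℝ) ≤ (L:ℝ) := (min_le_left _ _).trans hi₂L
        have hY'0 : 0 ≤ q' j ^ i₂ / (i₂.factorial : ℝ) := by positivity
        have hY'le : q' j ^ i₂ / (i₂.factorial : ℝ) ≤ q' j :=
          pow_div_fact_le_self hq'j0 (hq'.coord_le_one j) h1 _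
        have hZ0 : 0 ≤ (t) ^ (L - i₁ - i₂) / ((L - i₁ - i₂).factorial : ℝ) := by
          have := hq.tail_nonneg j; positivity
        have hZ1 : (t) ^ (L - i₁ - i₂) / ((L - i₁ - i₂).factorial : ℝ) ≤ 1 :=
          pow_div_fact_le_one (hq.tail_nonneg j) (hq.tail_le_one j) _ _
        have hYd : |q j ^ i₂ / (i₂.factorial : ℝ) - q' j ^ i₂ / (i₂.factorial : ℝ)| ≤ (L:ℝ) * dj := by
          refine le_trans (abs_pow_div_fact_sub hqj0 (hq.coord_le_one j) hq'j0
            (hq'.coord_le_one j) i₂ i₂) ?_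
          exact mul_le_mul hi₂L (le_refl dj) hdj0 (by linarith)
        have hZd : |(t) ^ (L - i₁ - i₂) / ((L - i₁ - i₂).factorial : ℝ) -
            (t') ^ (L - i₁ - i₂) / ((L - i₁ - i₂).factorial : ℝ)| ≤ (L:ℝ) * D := by
          refine le_trans (abs_pow_div_fact_sub (hq.tail_nonneg j) (hq.tail_le_one j)
            (hq'.tail_nonneg j) (hq'.tail_le_one j) _ _) ?_
          exact mul_le_mul heL htD (abs_nonneg _) (by linarith)
        calc |(min i₂ (k - i₁) : ℝ) * (q j ^ i₂ / (i₂.factorial : ℝ)) *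
            ((t) ^ (L - i₁ - i₂) / ((L - i₁ - i₂).factorial : ℝ)) -
           (min i₂ (k - i₁) : ℝ) * (q' j ^ i₂ / (i₂.factorial : ℝ)) *
            ((t') ^ (L - i₁ - i₂) / ((L - i₁ - i₂).factorial : ℝ))|
            = (min i₂ (k - i₁) : ℝ) * |(q j ^ i₂ / (i₂.factorial : ℝ)) *
              ((t) ^ (L - i₁ - i₂) / ((L - i₁ - i₂).factorial : ℝ)) -
              (q' j ^ i₂ / (i₂.factorial : ℝ)) *
              ((t') ^ (L - i₁ - i₂) / ((L - i₁ - i₂).factorial : ℝ))| := by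
              rw [mul_assoc, mul_assoc, ← mul_sub, abs_mul, abs_of_nonneg hm0]
          _ ≤ (L:ℝ) * (|q j ^ i₂ / (i₂.factorial : ℝ) - q' j ^ i₂ / (i₂.factorial : ℝ)| *
                ((t) ^ (L - i₁ - i₂) / ((L - i₁ - i₂).factorial : ℝ)) +
                (q' j ^ i₂ / (i₂.factorial : ℝ)) *
                |(t) ^ (L - i₁ - i₂) / ((L - i₁ - i₂).factorial : ℝ) -
                 (t') ^ (L - i₁ - i₂) / ((L - i₁ - i₂).factorial : ℝ)|) := by
              refine mul_le_mul hmL (abs_mul_sub_mul hZ0 hY'0) (abs_nonneg _) (by linarith)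
          _ ≤ (L:ℝ) * (((L:ℝ) * dj) * 1 + q' j * ((L:ℝ) * D)) := by
              refine mul_le_mul_of_nonneg_left ?_ (by linarith)
              refine add_le_add (mul_le_mul hYd hZ1 hZ0 (by positivity)) ?_
              exact mul_le_mul hY'le hZd (abs_nonneg _) hq'j0
          _ = (L:ℝ)^2 * (dj + q' j * D) := by ring
      refine le_trans (Finset.sum_le_sum hterm2) ?_
      rw [Finset.sum_const, nsmul_eq_mul]
      have hcard : ((Finset.Icc 1 (L - i₁)).card : ℝ) ≤ (L:ℝ) := by
        rw [Nat.card_Icc]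
        have : L - i₁ + 1 - 1 ≤ L := by omega
        exact_mod_cast this
      calc ((Finset.Icc 1 (L - i₁)).card : ℝ) * ((L:ℝ)^2 * (dj + q' j * D))
          ≤ (L:ℝ) * ((L:ℝ)^2 * (dj + q' j * D)) := by
            refine mul_le_mul_of_nonneg_right hcard (by positivity)
        _ = (L:ℝ)^3 * (dj + q' j * D) := by ring
    calc |((A) ^ i₁ / (i₁.factorial : ℝ)) * S - ((A') ^ i₁ / (i₁.factorial : ℝ)) * S'|
        ≤ |(A) ^ i₁ / (i₁.factorial : ℝ) - (A') ^ i₁ / (i₁.factorial : ℝ)| * S +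
          ((A') ^ i₁ / (i₁.factorial : ℝ)) * |S - S'| := abs_mul_sub_mul hS0 hX'0
      _ ≤ ((L:ℝ) * D) * ((L:ℝ)^2 * q j) + 1 * ((L:ℝ)^3 * (dj + q' j * D)) := by
          refine add_le_add (mul_le_mul hXd hSle hS0 (by positivity)) ?_
          exact mul_le_mul hX'1 hSd (abs_nonneg _) zero_le_one
      _ = (L:ℝ)^3 * (q j * D + (dj + q' j * D)) := by ring
      _ = (L:ℝ)^3 * R := by rw [hR]; ring
  refine le_trans (Finset.sum_le_sum hterm) ?_
  rw [Finset.sum_const, nsmul_eq_mul, Finset.card_range]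
  exact le_of_eq (by ring)

end zbarLemmas


section FmapLemmas
variable {L k : ℕ} {lam : ℝ} {q q' : ℕ → ℝ}

lemma Fmap_nonneg_of_coord_zero (hlam : 0 ≤ lam) (hq : memK q) (j : ℕ) (hj : q j = 0) :
    0 ≤ Fmap L k lam q j := by
  cases j with
  | zero =>
    show 0 ≤ -(lam * (L.factorial : ℝ)) * zbar L k 0 q + (k : ℝ) * q 1
    rw [zbar_of_coord_zero 0 hj, mul_zero, zero_add]
    exact mul_nonneg (by positivity) (hq.nonneg 1)
  | succ n =>
    show 0 ≤ lam * (L.factorial : ℝ) * (zbar L k n q - zbar L k (n + 1) q)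
      + (k : ℝ) * (q (n + 2) - q (n + 1))
    rw [zbar_of_coord_zero (n+1) hj, hj]
    have h1 : 0 ≤ zbar L k n q := zbar_nonneg hq n
    have h2 : 0 ≤ q (n + 2) := hq.nonneg _
    have h3 : 0 ≤ lam * (L.factorial : ℝ) := by positivity
    have h4 : (0:ℝ) ≤ (k:ℝ) := by positivity
    nlinarith

lemma Fmap_zero : Fmap L k lam (fun _ => (0:ℝ)) = fun _ => (0:ℝ) := by
  funext j
  have hz : ∀ i, zbar L k i (fun _ => (0:ℝ)) = 0 := fun i => zbar_of_coord_zero i rfl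
  cases j with
  | zero => show -(lam * (L.factorial : ℝ)) * zbar L k 0 _ + (k : ℝ) * (0:ℝ) = 0; rw [hz]; ring
  | succ n =>
    show lam * (L.factorial : ℝ) * (zbar L k n _ - zbar L k (n + 1) _) + (k : ℝ) * ((0:ℝ) - 0) = 0
    rw [hz, hz]; ring

lemma Fmap_diff_pointwise (hlam : 0 ≤ lam) (j : ℕ) :
    |Fmap L k lam q j - Fmap L k lam q' j| ≤
      lam * (L.factorial:ℝ) * (|zbar L k (j-1) q - zbar L k (j-1) q'| +
        |zbar L k j q - zbar L k j q'|)
      + (k:ℝ) * (|q (j+1) - q' (j+1)| + |q j - q' j|) := by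
  have hc : 0 ≤ lam * (L.factorial:ℝ) := by positivity
  have hk0 : (0:ℝ) ≤ (k:ℝ) := by positivity
  cases j with
  | zero =>
    have h : Fmap L k lam q 0 - Fmap L k lam q' 0 =
        -(lam * (L.factorial : ℝ)) * (zbar L k 0 q - zbar L k 0 q') + (k:ℝ) * (q 1 - q' 1) := by
      show (-(lam * (L.factorial : ℝ)) * zbar L k 0 q + (k : ℝ) * q 1) -
        (-(lam * (L.factorial : ℝ)) * zbar L k 0 q' + (k : ℝ) * q' 1) = _
      ring
    rw [h]
    refine (abs_add_le _ _).trans ?_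
    rw [abs_mul, abs_mul, abs_neg, abs_of_nonneg hc, abs_of_nonneg hk0]
    have e0 : (0:ℕ) - 1 = 0 := rfl
    rw [e0]
    nlinarith [abs_nonneg (zbar L k 0 q - zbar L k 0 q'), abs_nonneg (q 1 - q' 1),
      abs_nonneg (q 0 - q' 0)]
  | succ n =>
    have h : Fmap L k lam q (n+1) - Fmap L k lam q' (n+1) =
        lam * (L.factorial : ℝ) * ((zbar L k n q - zbar L k n q') -
          (zbar L k (n+1) q - zbar L k (n+1) q')) +
        (k:ℝ) * ((q (n+2) - q' (n+2)) - (q (n+1) - q' (n+1))) := by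
      show (lam * (L.factorial : ℝ) * (zbar L k n q - zbar L k (n + 1) q)
          + (k : ℝ) * (q (n + 2) - q (n + 1))) -
        (lam * (L.factorial : ℝ) * (zbar L k n q' - zbar L k (n + 1) q')
          + (k : ℝ) * (q' (n + 2) - q' (n + 1))) = _
      ring
    rw [h]
    refine (abs_add_le _ _).trans ?_
    rw [abs_mul, abs_mul, abs_mul, abs_of_nonneg hlam,
      abs_of_nonneg (show (0:ℝ) ≤ (L.factorial:ℝ) by positivity), abs_of_nonneg hk0]
    have e0 : (n+1:ℕ) - 1 = n := rfl
    rw [e0]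
    have h1 := abs_sub (zbar L k n q - zbar L k n q') (zbar L k (n+1) q - zbar L k (n+1) q')
    have h2 := abs_sub (q (n+2) - q' (n+2)) (q (n+1) - q' (n+1))
    have h3 : (n + 1 + 1 : ℕ) = n + 2 := rfl
    rw [h3]
    nlinarith

lemma Fmap_partial_sum (q : ℕ → ℝ) (N : ℕ) :
    ∑ j ∈ Finset.range (N+1), Fmap L k lam q j
      = -(lam*(L.factorial:ℝ)) * zbar L k N q + (k:ℝ) * q (N+1) := by
  induction N with
  | zero => simp [Fmap]
  | succ n ih =>
    rw [Finset.sum_range_succ, ih]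
    show _ + (lam * (L.factorial : ℝ) * (zbar L k n q - zbar L k (n + 1) q)
      + (k : ℝ) * (q (n + 2) - q (n + 1))) = _
    ring

end FmapLemmas

/-- global Lipschitz constant of F on K -/
def CF (L k : ℕ) (lam : ℝ) : ℝ := 9 * lam * (L.factorial:ℝ) * ((k:ℝ) * (L:ℝ)^3) + 2*(k:ℝ)

lemma CF_nonneg {L k : ℕ} {lam : ℝ} (hlam : 0 ≤ lam) : 0 ≤ CF L k lam := by
  unfold CF; positivity

section core
variable {L k : ℕ} {lam : ℝ} {q q' : ℕ → ℝ}

set_option maxHeartbeats 1000000 in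
lemma Fmap_lip (hk1 : 1 ≤ k) (hkL : k ≤ L) (hlam : 0 ≤ lam) (hq : memK q) (hq' : memK q') :
    Summable (fun j => |Fmap L k lam q j - Fmap L k lam q' j|) ∧
    ∑' j, |Fmap L k lam q j - Fmap L k lam q' j|
      ≤ CF L k lam * ∑' i, |q i - q' i| := by
  set D := ∑' i, |q i - q' i| with hDdef
  have hδ : Summable (fun i => |q i - q' i|) := (hq.summable.sub hq'.summable).abs
  have hD0 : 0 ≤ D := tsum_nonneg fun i => abs_nonneg _
  set C1 : ℝ := (k:ℝ) * (L:ℝ)^3 with hC1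
  have hC10 : 0 ≤ C1 := by positivity
  set c : ℝ := lam * (L.factorial:ℝ) with hc
  have hc0 : 0 ≤ c := by positivity
  set H : ℕ → ℝ := fun j => |zbar L k j q - zbar L k j q'| with hH
  set G : ℕ → ℝ := fun j => C1 * (q j * D + |q j - q' j| + q' j * D) with hG
  have hHle : ∀ j, H j ≤ G j := fun j => zbar_diff hk1 hkL hq hq' j
  have hGsum : Summable G := by
    apply Summable.mul_left
    exact ((hq.summable.mul_right D).add hδ).add (hq'.summable.mul_right D)
  have hHsum : Summable H := Summable.of_nonneg_of_le (fun j => abs_nonneg _) hHle hGsum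
  have hH0 : ∀ j, 0 ≤ H j := fun j => abs_nonneg _
  have htsumH : ∑' j, H j ≤ 3 * C1 * D := by
    refine (Summable.tsum_le_tsum hHle hHsum hGsum).trans ?_
    have h1 : ∑' j, G j = C1 * ((∑' j, q j) * D + D + (∑' j, q' j) * D) := by
      rw [hG, tsum_mul_left]
      congr 1
      rw [Summable.tsum_add ((hq.summable.mul_right D).add hδ) (hq'.summable.mul_right D),
        Summable.tsum_add (hq.summable.mul_right D) hδ, tsum_mul_right, tsum_mul_right]
    rw [h1]
    have h2 := hq.tsum_le
    have h3 := hq'.tsum_le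
    have h4 : 0 ≤ ∑' j, q j := tsum_nonneg hq.nonneg
    have h5 : 0 ≤ ∑' j, q' j := tsum_nonneg hq'.nonneg
    have h6 : (∑' j, q j) * D ≤ D := by nlinarith
    have h7 : (∑' j, q' j) * D ≤ D := by nlinarith
    have h8 : (∑' j, q j) * D + D + (∑' j, q' j) * D ≤ 3 * D := by linarith
    calc C1 * ((∑' j, q j) * D + D + (∑' j, q' j) * D) ≤ C1 * (3*D) :=
          mul_le_mul_of_nonneg_left h8 hC10
      _ = 3 * C1 * D := by ring
  have htsumH0 : 0 ≤ ∑' j, H j := tsum_nonneg hH0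
  have hHshift : Summable (fun j => H (j - 1)) := by
    refine (summable_nat_add_iff 1).1 ?_
    simpa using hHsum
  have htsumHshift : ∑' j, H (j - 1) ≤ 2 * ∑' j, H j := by
    rw [Summable.tsum_eq_zero_add hHshift]
    have e : ∀ n : ℕ, H (n + 1 - 1) = H n := fun n => by simp
    have h0 : H (0 - 1) = H 0 := rfl
    rw [h0]
    have : ∑' n : ℕ, H (n + 1 - 1) = ∑' n, H n := by
      refine tsum_congr fun n => e n
    rw [this]
    have := Summable.le_tsum hHsum 0 (fun m _ => hH0 m)
    linarith
  have hδshift : Summable (fun j => |q (j+1) - q' (j+1)|) := (summable_nat_add_iff 1).2 hδ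
  have htsumδshift : ∑' j, |q (j+1) - q' (j+1)| ≤ D := by
    refine Summable.tsum_le_tsum_of_inj (fun m => m + 1) (fun a b hab => by dsimp at hab; omega)
      (fun c _ => abs_nonneg _) (fun m => le_refl _) hδshift hδ
  set b : ℕ → ℝ := fun j => c * (H (j-1) + H j) + (k:ℝ) * (|q (j+1) - q' (j+1)| + |q j - q' j|)
    with hb
  have hbsum : Summable b :=
    (((hHshift.add hHsum)).mul_left c).add (((hδshift.add hδ)).mul_left (k:ℝ))
  have hFb : ∀ j, |Fmap L k lam q j - Fmap L k lam q' j| ≤ b j := fun j =>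
    Fmap_diff_pointwise hlam j
  have hFsum : Summable (fun j => |Fmap L k lam q j - Fmap L k lam q' j|) :=
    Summable.of_nonneg_of_le (fun j => abs_nonneg _) hFb hbsum
  refine ⟨hFsum, ?_⟩
  refine (Summable.tsum_le_tsum hFb hFsum hbsum).trans ?_
  have htb : ∑' j, b j = c * ((∑' j, H (j-1)) + ∑' j, H j)
      + (k:ℝ) * ((∑' j, |q (j+1) - q' (j+1)|) + D) := by
    rw [hb, Summable.tsum_add ((hHshift.add hHsum).mul_left c) ((hδshift.add hδ).mul_left (k:ℝ)),
      tsum_mul_left, tsum_mul_left, Summable.tsum_add hHshift hHsum, Summable.tsum_add hδshift hδ]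
  rw [htb]
  have hk0 : (0:ℝ) ≤ (k:ℝ) := by positivity
  have hsh0 : 0 ≤ ∑' j, H (j - 1) := tsum_nonneg fun j => hH0 _
  have hds0 : 0 ≤ ∑' j, |q (j+1) - q' (j+1)| := tsum_nonneg fun j => abs_nonneg _
  have : c * ((∑' j, H (j-1)) + ∑' j, H j) ≤ c * (9 * C1 * D) := by
    refine mul_le_mul_of_nonneg_left ?_ hc0
    nlinarith
  have h2 : (k:ℝ) * ((∑' j, |q (j+1) - q' (j+1)|) + D) ≤ (k:ℝ) * (2*D) := by
    refine mul_le_mul_of_nonneg_left ?_ hk0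
    linarith
  have : CF L k lam * D = c * (9 * C1 * D) + (k:ℝ)*(2*D) := by
    rw [CF, hc, hC1]; ring
  linarith

end core


abbrev E1 := lp (fun _ : ℕ => ℝ) 1

namespace E1

lemma summable_abs (x : E1) : Summable fun j => |x j| := by
  have := lp.memℓp x
  rw [memℓp_gen_iff (by norm_num : (0:ℝ) < (1:ENNReal).toReal)] at this
  simpa [Real.norm_eq_abs] using this

lemma norm_eq (x : E1) : ‖x‖ = ∑' j, |x j| := by
  rw [lp.norm_eq_tsum_rpow (by norm_num : (0:ℝ) < (1:ENNReal).toReal)]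
  simp [Real.norm_eq_abs]

lemma memℓp_of_abs {f : ℕ → ℝ} (h : Summable fun j => |f j|) : Memℓp f (1:ENNReal) := by
  apply memℓp_gen
  simpa [Real.norm_eq_abs] using h

lemma norm_sub_eq (x y : E1) : ‖x - y‖ = ∑' j, |x j - y j| := by
  rw [norm_eq (x - y)]
  refine tsum_congr fun j => ?_
  rw [lp.coeFn_sub, Pi.sub_apply]

lemma coord_abs_le_norm (x : E1) (j : ℕ) : |x j| ≤ ‖x‖ := by
  simpa [Real.norm_eq_abs] using lp.norm_apply_le_norm (by norm_num : (1:ENNReal) ≠ 0) x j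

end E1

/-- positive part map -/
def posE (x : E1) : E1 :=
  ⟨fun j => max (x j) 0, E1.memℓp_of_abs (Summable.of_nonneg_of_le (fun j => abs_nonneg _)
    (fun j => by
      rw [abs_of_nonneg (le_max_right (x j) 0)]
      exact max_le (le_abs_self _) (abs_nonneg _)) (E1.summable_abs x))⟩

lemma posE_coord (x : E1) (j : ℕ) : (posE x) j = max (x j) 0 := rfl

lemma posE_lip (x y : E1) : ‖posE x - posE y‖ ≤ ‖x - y‖ := by
  rw [E1.norm_sub_eq, E1.norm_sub_eq]
  refine Summable.tsum_le_tsum (fun j => ?_) ?_ ?_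
  · rw [posE_coord, posE_coord]
    exact abs_max_sub_max_le_abs _ _ _
  · exact (E1.summable_abs (posE x - posE y)).congr fun j => by
      rw [lp.coeFn_sub, Pi.sub_apply, posE_coord, posE_coord]
  · exact (E1.summable_abs (x - y)).congr fun j => by rw [lp.coeFn_sub, Pi.sub_apply]

/-- scaling retraction onto the unit ball -/
def sigE (x : E1) : E1 := (max 1 ‖x‖)⁻¹ • x

lemma sigE_coord (x : E1) (j : ℕ) : (sigE x) j = (max 1 ‖x‖)⁻¹ * x j := by
  rw [sigE, lp.coeFn_smul]; rfl

lemma sigE_norm_le_one (x : E1) : ‖sigE x‖ ≤ 1 := by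
  rw [sigE, norm_smul]
  have h1 : (0:ℝ) < max 1 ‖x‖ := lt_of_lt_of_le one_pos (le_max_left _ _)
  rw [Real.norm_eq_abs, abs_of_pos (inv_pos.2 h1), inv_mul_le_iff₀ h1, mul_one]
  exact le_max_right _ _

lemma sigE_lip (x y : E1) : ‖sigE x - sigE y‖ ≤ 2 * ‖x - y‖ := by
  set a := max 1 ‖x‖ with ha
  set b := max 1 ‖y‖ with hb
  have ha1 : (1:ℝ) ≤ a := le_max_left _ _
  have hb1 : (1:ℝ) ≤ b := le_max_left _ _
  have ha0 : (0:ℝ) < a := lt_of_lt_of_le one_pos ha1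
  have hb0 : (0:ℝ) < b := lt_of_lt_of_le one_pos hb1
  have hab : |a - b| ≤ ‖x - y‖ := by
    have h1 : a = max ‖x‖ 1 := by rw [ha, max_comm]
    have h2 : b = max ‖y‖ 1 := by rw [hb, max_comm]
    rw [h1, h2]
    exact (abs_max_sub_max_le_abs _ _ _).trans (abs_norm_sub_norm_le x y)
  have key : sigE x - sigE y = a⁻¹ • (x - y) + ((b - a) * (a⁻¹ * b⁻¹)) • y := by
    rw [sigE, sigE, ← ha, ← hb, smul_sub]
    have h1 : ((b - a) * (a⁻¹ * b⁻¹)) = a⁻¹ - b⁻¹ := by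
      field_simp
    rw [h1, sub_smul]
    abel
  rw [key]
  refine (norm_add_le _ _).trans ?_
  rw [norm_smul, norm_smul, Real.norm_eq_abs, Real.norm_eq_abs,
    abs_of_pos (inv_pos.2 ha0), abs_mul, abs_of_pos (mul_pos (inv_pos.2 ha0) (inv_pos.2 hb0))]
  have h2 : a⁻¹ * ‖x - y‖ ≤ 1 * ‖x - y‖ := by
    refine mul_le_mul_of_nonneg_right ?_ (norm_nonneg _)
    rw [inv_le_one_iff₀]; right; exact ha1
  have h3 : |b - a| * (a⁻¹ * b⁻¹) * ‖y‖ ≤ ‖x - y‖ := by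
    have hyb : ‖y‖ ≤ b := le_max_right _ _
    have habs : |b - a| ≤ ‖x - y‖ := by rw [abs_sub_comm]; exact hab
    have h4 : a⁻¹ ≤ 1 := by rw [inv_le_one_iff₀]; right; exact ha1
    have h5 : b⁻¹ * ‖y‖ ≤ 1 := by
      rw [inv_mul_le_iff₀ hb0, mul_one]; exact hyb
    have h6 : 0 ≤ a⁻¹ * b⁻¹ * ‖y‖ := by positivity
    calc |b - a| * (a⁻¹ * b⁻¹) * ‖y‖ = |b - a| * (a⁻¹ * (b⁻¹ * ‖y‖)) := by ring
      _ ≤ ‖x - y‖ * (1 * 1) := by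
          refine mul_le_mul habs ?_ (by positivity) (norm_nonneg _)
          exact mul_le_mul h4 h5 (by positivity) zero_le_one
      _ = ‖x - y‖ := by ring
  linarith

/-- combined retraction onto K -/
def PE (x : E1) : E1 := posE (sigE x)

lemma PE_coord (x : E1) (j : ℕ) : (PE x) j = max ((max 1 ‖x‖)⁻¹ * x j) 0 := by
  rw [PE, posE_coord, sigE_coord]

lemma PE_lip (x y : E1) : ‖PE x - PE y‖ ≤ 2 * ‖x - y‖ :=
  (posE_lip _ _).trans (sigE_lip x y)

lemma PE_memK (x : E1) : memK (⇑(PE x)) := by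
  refine ⟨fun j => by rw [PE_coord]; exact le_max_right _ _, (E1.summable_abs (PE x)).of_abs, ?_⟩
  have h1 : ∑' j, (PE x) j = ‖PE x‖ := by
    rw [E1.norm_eq]
    refine tsum_congr fun j => ?_
    rw [abs_of_nonneg (by rw [PE_coord]; exact le_max_right _ _)]
  rw [h1]
  calc ‖PE x‖ = ‖posE (sigE x) - posE 0‖ := by
        congr 1
        have : posE (0:E1) = 0 := by
          apply lp.ext; funext j
          rw [posE_coord]
          simp [lp.coeFn_zero]
        rw [this, sub_zero, PE]
    _ ≤ ‖sigE x - 0‖ := posE_lip _ _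
    _ = ‖sigE x‖ := by rw [sub_zero]
    _ ≤ 1 := sigE_norm_le_one x

lemma PE_eq_self {x : E1} (h : memS (⇑x)) : PE x = x := by
  have hn : ‖x‖ = 1 := by
    rw [E1.norm_eq]
    rw [← h.2.2]
    exact tsum_congr fun j => abs_of_nonneg (h.1 j)
  apply lp.ext; funext j
  rw [PE_coord, hn]
  simp [max_eq_left (h.1 j)]

section Ftil
variable (L k : ℕ) (lam : ℝ)

lemma memK_zero : memK (fun _ => (0:ℝ)) :=
  ⟨fun _ => le_refl 0, summable_zero, by simp⟩

lemma Fmap_abs_summable_of_memK (hk1 : 1 ≤ k) (hkL : k ≤ L) (hlam : 0 ≤ lam) {q : ℕ → ℝ}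
    (hq : memK q) : Summable (fun j => |Fmap L k lam q j|) := by
  have h := (Fmap_lip hk1 hkL hlam hq (memK_zero)).1
  refine h.congr fun j => ?_
  rw [Fmap_zero]; simp

lemma Fmap_abs_tsum_le (hk1 : 1 ≤ k) (hkL : k ≤ L) (hlam : 0 ≤ lam) {q : ℕ → ℝ}
    (hq : memK q) : ∑' j, |Fmap L k lam q j| ≤ CF L k lam := by
  have h := (Fmap_lip hk1 hkL hlam hq (memK_zero)).2
  rw [Fmap_zero] at h
  simp only [sub_zero] at h
  have h2 : ∑' i, |q i| ≤ 1 := by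
    have he : ∀ i, |q i| = q i := fun i => abs_of_nonneg (hq.nonneg i)
    rw [tsum_congr he]
    exact hq.tsum_le
  calc ∑' j, |Fmap L k lam q j| ≤ CF L k lam * ∑' i, |q i| := h
    _ ≤ CF L k lam * 1 := mul_le_mul_of_nonneg_left h2 (CF_nonneg hlam)
    _ = CF L k lam := mul_one _

variable (hk1 : 1 ≤ k) (hkL : k ≤ L) (hlam : 0 ≤ lam)

/-- the extended drift map on all of ℓ¹ -/
def Ftil (x : E1) : E1 :=
  ⟨Fmap L k lam (⇑(PE x)),
    E1.memℓp_of_abs (Fmap_abs_summable_of_memK L k lam hk1 hkL hlam (PE_memK x))⟩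

lemma Ftil_coord (x : E1) (j : ℕ) : (Ftil L k lam hk1 hkL hlam x) j = Fmap L k lam (⇑(PE x)) j :=
  rfl

lemma Ftil_dist (x y : E1) :
    ‖Ftil L k lam hk1 hkL hlam x - Ftil L k lam hk1 hkL hlam y‖ ≤ (2 * CF L k lam) * ‖x - y‖ := by
  rw [E1.norm_sub_eq]
  have h1 := (Fmap_lip hk1 hkL hlam (PE_memK x) (PE_memK y)).2
  refine le_trans (le_of_eq (tsum_congr fun j => by rw [Ftil_coord, Ftil_coord])) ?_
  refine h1.trans ?_
  have h2 : ∑' i, |(PE x) i - (PE y) i| = ‖PE x - PE y‖ := (E1.norm_sub_eq _ _).symm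
  rw [h2]
  have := PE_lip x y
  have hcf := CF_nonneg (L := L) (k := k) hlam
  nlinarith

lemma Ftil_lipschitz : LipschitzWith (Real.toNNReal (2 * CF L k lam))
    (Ftil L k lam hk1 hkL hlam) := by
  refine LipschitzWith.of_dist_le_mul fun x y => ?_
  rw [dist_eq_norm, dist_eq_norm]
  refine (Ftil_dist L k lam hk1 hkL hlam x y).trans ?_
  have hcf := CF_nonneg (L := L) (k := k) hlam
  rw [Real.coe_toNNReal _ (by linarith)]

lemma Ftil_norm_le (x : E1) : ‖Ftil L k lam hk1 hkL hlam x‖ ≤ CF L k lam := by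
  rw [E1.norm_eq]
  refine le_trans (le_of_eq (tsum_congr fun j => by rw [Ftil_coord])) ?_
  exact Fmap_abs_tsum_le L k lam hk1 hkL hlam (PE_memK x)

end Ftil

/-- coordinate evaluation as a continuous linear map -/
def coordCLM (j : ℕ) : E1 →L[ℝ] ℝ :=
  LinearMap.mkContinuous
    { toFun := fun x => x j
      map_add' := fun x y => by
        show (x + y) j = x j + y j
        rw [lp.coeFn_add]; rfl
      map_smul' := fun c x => by
        show (c • x) j = (RingHom.id ℝ) c • x j
        rw [lp.coeFn_smul]; rfl } 1
    (fun x => by simpa using (E1.coord_abs_le_norm x j))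

lemma coordCLM_apply (j : ℕ) (x : E1) : coordCLM j x = x j := rfl

/-- total mass as a continuous linear map -/
def sumCLM : E1 →L[ℝ] ℝ :=
  LinearMap.mkContinuous
    { toFun := fun x => ∑' j, x j
      map_add' := fun x y => by
        have hx := (E1.summable_abs x).of_abs
        have hy := (E1.summable_abs y).of_abs
        rw [← Summable.tsum_add hx hy]
        exact tsum_congr fun j => by rw [lp.coeFn_add]; rfl
      map_smul' := fun c x => by
        simp only [RingHom.id_apply, smul_eq_mul]
        rw [← tsum_mul_left]
        exact tsum_congr fun j => by rw [lp.coeFn_smul]; rfl } 1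
    (fun x => by
      simp only [LinearMap.coe_mk, AddHom.coe_mk, one_mul, Real.norm_eq_abs]
      calc |∑' j, x j| ≤ ∑' j, |x j| := by
            simpa [Real.norm_eq_abs] using norm_tsum_le_tsum_norm (f := fun j => x j)
              (by simpa [Real.norm_eq_abs] using E1.summable_abs x)
        _ = ‖x‖ := (E1.norm_eq x).symm)

lemma sumCLM_apply (x : E1) : sumCLM x = ∑' j, x j := rfl

section conservation
variable {L k : ℕ} {lam : ℝ}

lemma Fmap_hasSum_zero (hk1 : 1 ≤ k) (hkL : k ≤ L) (hlam : 0 ≤ lam) {q : ℕ → ℝ}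
    (hq : memK q) : ∑' j, Fmap L k lam q j = 0 := by
  have hsum : Summable (Fmap L k lam q) :=
    (Fmap_abs_summable_of_memK L k lam hk1 hkL hlam hq).of_abs
  have h1 : Filter.Tendsto (fun N => ∑ j ∈ Finset.range N, Fmap L k lam q j)
      Filter.atTop (nhds (∑' j, Fmap L k lam q j)) := hsum.hasSum.tendsto_sum_nat
  have h2 : Filter.Tendsto (fun N => ∑ j ∈ Finset.range (N+1), Fmap L k lam q j)
      Filter.atTop (nhds (∑' j, Fmap L k lam q j)) :=
    h1.comp (Filter.tendsto_add_atTop_nat 1)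
  have h3 : Filter.Tendsto (fun N => ∑ j ∈ Finset.range (N+1), Fmap L k lam q j)
      Filter.atTop (nhds 0) := by
    have he : (fun N => ∑ j ∈ Finset.range (N+1), Fmap L k lam q j)
        = fun N => -(lam*(L.factorial:ℝ)) * zbar L k N q + (k:ℝ) * q (N+1) := by
      funext N; exact Fmap_partial_sum q N
    rw [he]
    have hz : Filter.Tendsto (fun N => zbar L k N q) Filter.atTop (nhds 0) := by
      refine squeeze_zero (fun N => zbar_nonneg hq N) (fun N => zbar_le hkL hq N) ?_
      have := hq.summable.tendsto_atTop_zero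
      have h4 : Filter.Tendsto (fun N => (k:ℝ) * (L:ℝ)^2 * q N) Filter.atTop (nhds 0) := by
        simpa using this.const_mul ((k:ℝ) * (L:ℝ)^2)
      exact h4
    have hq0 : Filter.Tendsto (fun N => q (N+1)) Filter.atTop (nhds 0) :=
      hq.summable.tendsto_atTop_zero.comp (Filter.tendsto_add_atTop_nat 1)
    have := (hz.const_mul (-(lam*(L.factorial:ℝ)))).add (hq0.const_mul (k:ℝ))
    simpa using this
  exact tendsto_nhds_unique h2 h3

lemma sumCLM_Ftil (hk1 : 1 ≤ k) (hkL : k ≤ L) (hlam : 0 ≤ lam) (x : E1) :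
    sumCLM (Ftil L k lam hk1 hkL hlam x) = 0 := by
  rw [sumCLM_apply]
  have : ∀ j, (Ftil L k lam hk1 hkL hlam x) j = Fmap L k lam (⇑(PE x)) j := fun j => rfl
  rw [tsum_congr this]
  exact Fmap_hasSum_zero hk1 hkL hlam (PE_memK x)

lemma Ftil_eq_of_memS (hk1 : 1 ≤ k) (hkL : k ≤ L) (hlam : 0 ≤ lam) {x : E1}
    (hx : memS (⇑x)) (j : ℕ) :
    (Ftil L k lam hk1 hkL hlam x) j = Fmap L k lam (⇑x) j := by
  rw [Ftil_coord, PE_eq_self hx]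

end conservation

section ODE
variable {L k : ℕ} {lam : ℝ} (hk1 : 1 ≤ k) (hkL : k ≤ L) (hlam : 0 ≤ lam) {T : ℝ} (hT : 0 < T)

lemma exists_global_solution (hT : 0 < T) (x₀ : E1) :
    ∃ f : ℝ → E1, f 0 = x₀ ∧ ∀ t ∈ Set.Icc (-1:ℝ) (T+1),
      HasDerivWithinAt f (Ftil L k lam hk1 hkL hlam (f t)) (Set.Icc (-1:ℝ) (T+1)) t := by
  have hcf := CF_nonneg (L := L) (k := k) hlam
  have hpl : IsPicardLindelof (fun _ x => Ftil L k lam hk1 hkL hlam x)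
      (⟨0, by constructor <;> linarith⟩ : Set.Icc (-1:ℝ) (T+1)) x₀
      (Real.toNNReal (CF L k lam * (T+2) + 1)) 0 (Real.toNNReal (CF L k lam))
      (Real.toNNReal (2 * CF L k lam)) := by
    refine ⟨?_, ?_, ?_, ?_⟩
    · intro t _
      apply LipschitzWith.lipschitzOnWith
      exact Ftil_lipschitz L k lam hk1 hkL hlam
    · intro x _
      exact continuousOn_const
    · intro t _ x _
      rw [Real.coe_toNNReal _ hcf]
      exact Ftil_norm_le L k lam hk1 hkL hlam x
    · have h2 : ((Real.toNNReal (CF L k lam * (T+2) + 1) : NNReal) : ℝ) = CF L k lam * (T+2) + 1 :=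
        Real.coe_toNNReal _ (by positivity)
      simp only [Real.coe_toNNReal _ hcf, h2, NNReal.coe_zero, tsub_zero, sub_zero]
      exact le_trans (mul_le_mul_of_nonneg_left (max_le (by linarith) (by linarith)) hcf)
        (le_of_lt (by linarith : CF L k lam * (T+2) < CF L k lam * (T+2) + 1))
  obtain ⟨f, hf0, hf⟩ := hpl.exists_eq_forall_mem_Icc_hasDerivWithinAt₀
  exact ⟨f, hf0, hf⟩

lemma sol_hasDerivAt {f : ℝ → E1}
    (hf : ∀ t ∈ Set.Icc (-1:ℝ) (T+1),
      HasDerivWithinAt f (Ftil L k lam hk1 hkL hlam (f t)) (Set.Icc (-1:ℝ) (T+1)) t)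
    {t : ℝ} (ht : t ∈ Set.Icc (0:ℝ) T) :
    HasDerivAt f (Ftil L k lam hk1 hkL hlam (f t)) t := by
  have h1 : t ∈ Set.Icc (-1:ℝ) (T+1) := ⟨by linarith [ht.1], by linarith [ht.2]⟩
  refine (hf t h1).hasDerivAt ?_
  exact Icc_mem_nhds (by linarith [ht.1]) (by linarith [ht.2])

lemma sol_nonneg {f : ℝ → E1}
    (hderiv : ∀ t ∈ Set.Icc (0:ℝ) T, HasDerivAt f (Ftil L k lam hk1 hkL hlam (f t)) t)
    (hf0 : ∀ j, 0 ≤ (f 0) j) :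
    ∀ t ∈ Set.Icc (0:ℝ) T, ∀ j, 0 ≤ (f t) j := by
  intro t₁ ht₁ j
  by_contra hneg
  push_neg at hneg
  set g : ℝ → ℝ := fun t => coordCLM j (f t) with hg
  have hgneg : g t₁ < 0 := hneg
  have hg' : ∀ t ∈ Set.Icc (0:ℝ) T,
      HasDerivAt g (Fmap L k lam (⇑(PE (f t))) j) t := by
    intro t ht
    have := (coordCLM j).hasFDerivAt.comp_hasDerivAt t (hderiv t ht)
    exact this
  have hgcont : ContinuousOn g (Set.Icc (0:ℝ) T) := fun t ht =>
    ((hg' t ht).continuousAt).continuousWithinAt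
  set A := Set.Icc (0:ℝ) t₁ ∩ {t | 0 ≤ g t} with hA
  have hsubT : Set.Icc (0:ℝ) t₁ ⊆ Set.Icc (0:ℝ) T := Set.Icc_subset_Icc le_rfl ht₁.2
  have hAclosed : IsClosed A := by
    have h1 : ContinuousOn g (Set.Icc (0:ℝ) t₁) := hgcont.mono hsubT
    exact h1.preimage_isClosed_of_isClosed isClosed_Icc isClosed_Ici
  have h0A : (0:ℝ) ∈ A := ⟨⟨le_rfl, ht₁.1⟩, hf0 j⟩
  have hAbdd : BddAbove A := BddAbove.mono (Set.inter_subset_left) bddAbove_Icc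
  set t₀ := sSup A with ht₀def
  have ht₀A : t₀ ∈ A := hAclosed.csSup_mem ⟨0, h0A⟩ hAbdd
  have ht₀0 : 0 ≤ t₀ := ht₀A.1.1
  have ht₀t₁ : t₀ ≤ t₁ := ht₀A.1.2
  have hgt₀ : 0 ≤ g t₀ := ht₀A.2
  have ht₀lt : t₀ < t₁ := by
    rcases lt_or_eq_of_le ht₀t₁ with h | h
    · exact h
    · exfalso; rw [h] at hgt₀; linarith
  have hnegOn : ∀ t ∈ Set.Ioc t₀ t₁, g t < 0 := by
    intro t ht
    by_contra hc
    push_neg at hc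
    have : t ∈ A := ⟨⟨le_trans ht₀0 ht.1.le, ht.2⟩, hc⟩
    have := le_csSup hAbdd this
    linarith [ht.1]
  have hmono : MonotoneOn g (Set.Icc t₀ t₁) := by
    have hconv : Convex ℝ (Set.Icc t₀ t₁) := convex_Icc _ _
    have hsub2 : Set.Icc t₀ t₁ ⊆ Set.Icc (0:ℝ) T :=
      Set.Icc_subset_Icc ht₀0 ht₁.2
    have hint : interior (Set.Icc t₀ t₁) = Set.Ioo t₀ t₁ := interior_Icc
    refine monotoneOn_of_deriv_nonneg hconv (hgcont.mono hsub2) ?_ ?_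
    · intro x hx
      rw [hint] at hx
      exact ((hg' x (hsub2 (Set.Ioo_subset_Icc_self hx))).differentiableAt).differentiableWithinAt
    · intro x hx
      rw [hint] at hx
      have hx' : x ∈ Set.Icc (0:ℝ) T := hsub2 (Set.Ioo_subset_Icc_self hx)
      rw [(hg' x hx').deriv]
      have hgx : g x < 0 := hnegOn x ⟨hx.1, hx.2.le⟩
      have hcoord : (⇑(PE (f x))) j = 0 := by
        rw [PE_coord]
        have h1 : (0:ℝ) < max 1 ‖f x‖ := lt_of_lt_of_le one_pos (le_max_left _ _)
        have h2 : (max 1 ‖f x‖)⁻¹ * (f x) j < 0 :=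
          mul_neg_of_pos_of_neg (inv_pos.2 h1) hgx
        exact max_eq_right h2.le
      exact Fmap_nonneg_of_coord_zero hlam (PE_memK (f x)) j hcoord
  have := hmono (Set.left_mem_Icc.2 ht₀t₁) (Set.right_mem_Icc.2 ht₀t₁) ht₀t₁
  linarith

lemma sol_mass {f : ℝ → E1}
    (hderiv : ∀ t ∈ Set.Icc (0:ℝ) T, HasDerivAt f (Ftil L k lam hk1 hkL hlam (f t)) t)
    (hf0 : sumCLM (f 0) = 1) :
    ∀ t ∈ Set.Icc (0:ℝ) T, sumCLM (f t) = 1 := by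
  intro t ht
  set h : ℝ → ℝ := fun t => sumCLM (f t) with hh
  have hcont : ContinuousOn h (Set.Icc (0:ℝ) T) := fun s hs =>
    ((sumCLM.hasFDerivAt.comp_hasDerivAt s (hderiv s hs)).continuousAt).continuousWithinAt
  have hder : ∀ s ∈ Set.Ico (0:ℝ) T, HasDerivWithinAt h 0 (Set.Ici s) s := by
    intro s hs
    have h1 : HasDerivAt h (sumCLM (Ftil L k lam hk1 hkL hlam (f s))) s :=
      sumCLM.hasFDerivAt.comp_hasDerivAt s (hderiv s ⟨hs.1, hs.2.le⟩)
    rw [sumCLM_Ftil hk1 hkL hlam] at h1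
    exact h1.hasDerivWithinAt
  have := constant_of_has_deriv_right_zero hcont hder t ht
  rw [hh] at this
  simp only at this
  rw [this, hf0]

end ODE

section Assembly
variable {L k : ℕ} {lam : ℝ}

lemma integral_coord_comm {g : ℝ → E1} {a b : ℝ} (hg : IntervalIntegrable g MeasureTheory.volume a b)
    (j : ℕ) : (∫ s in a..b, g s) j = ∫ s in a..b, (g s) j := by
  exact ((coordCLM j).intervalIntegral_comp_comm hg).symm

theorem ode_exists_unique' (hL : 1 ≤ L) (hk : 1 ≤ k) (hkL : k ≤ L)
    (hlam' : 0 < lam) (T : ℝ) (hT : 0 < T) (π₀ : ℕ → ℝ) (hπ₀ : memS π₀) :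
    (∃ π : ℝ → lp (fun _ : ℕ => ℝ) 1,
      ContinuousOn π (Set.Icc 0 T) ∧
      (∀ t ∈ Set.Icc (0:ℝ) T, memS (π t)) ∧
      (∀ t ∈ Set.Icc (0:ℝ) T, ∀ j : ℕ,
        (π t) j = π₀ j + ∫ s in (0:ℝ)..t, Fmap L k lam (π s) j)) ∧
    (∀ π πt : ℝ → lp (fun _ : ℕ => ℝ) 1,
      ContinuousOn π (Set.Icc 0 T) → ContinuousOn πt (Set.Icc 0 T) →
      (∀ t ∈ Set.Icc (0:ℝ) T, memS (π t)) → (∀ t ∈ Set.Icc (0:ℝ) T, memS (πt t)) →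
      (∀ t ∈ Set.Icc (0:ℝ) T, ∀ j : ℕ,
        (π t) j = π₀ j + ∫ s in (0:ℝ)..t, Fmap L k lam (π s) j) →
      (∀ t ∈ Set.Icc (0:ℝ) T, ∀ j : ℕ,
        (πt t) j = π₀ j + ∫ s in (0:ℝ)..t, Fmap L k lam (πt s) j) →
      ∀ t ∈ Set.Icc (0:ℝ) T, π t = πt t) := by
  have hlam : 0 ≤ lam := hlam'.le
  set Fv := Ftil L k lam hk hkL hlam with hFv
  have hlip := Ftil_lipschitz L k lam hk hkL hlam
  constructor
  · -- existence
    have hx₀mem : Memℓp π₀ (1:ENNReal) := E1.memℓp_of_abs hπ₀.2.1.abs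
    set x₀ : E1 := ⟨π₀, hx₀mem⟩ with hx₀
    obtain ⟨f, hf0, hfW⟩ := exists_global_solution hk hkL hlam hT x₀
    have hdAt : ∀ t ∈ Set.Icc (0:ℝ) T, HasDerivAt f (Fv (f t)) t :=
      fun t ht => sol_hasDerivAt hk hkL hlam hfW ht
    have hfc : ContinuousOn f (Set.Icc (0:ℝ) T) :=
      fun t ht => ((hdAt t ht).continuousAt).continuousWithinAt
    have hf0c : ∀ j, (f 0) j = π₀ j := fun j => by rw [hf0]
    have hnn : ∀ t ∈ Set.Icc (0:ℝ) T, ∀ j, 0 ≤ (f t) j :=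
      sol_nonneg hk hkL hlam hdAt (fun j => by rw [hf0c j]; exact hπ₀.1 j)
    have hmass : ∀ t ∈ Set.Icc (0:ℝ) T, sumCLM (f t) = 1 := by
      refine sol_mass hk hkL hlam hdAt ?_
      rw [sumCLM_apply]
      rw [tsum_congr hf0c]
      exact hπ₀.2.2
    have hmemS : ∀ t ∈ Set.Icc (0:ℝ) T, memS (⇑(f t)) := by
      intro t ht
      exact ⟨hnn t ht, (E1.summable_abs (f t)).of_abs, hmass t ht⟩
    refine ⟨f, hfc, hmemS, ?_⟩
    intro t ht j
    have huIcc : Set.uIcc (0:ℝ) t = Set.Icc 0 t := Set.uIcc_of_le ht.1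
    have hsubT : Set.Icc (0:ℝ) t ⊆ Set.Icc (0:ℝ) T := Set.Icc_subset_Icc le_rfl ht.2
    have hgc : ContinuousOn (fun s => Fv (f s)) (Set.Icc (0:ℝ) T) :=
      hlip.continuous.comp_continuousOn hfc
    have hInt : IntervalIntegrable (fun s => Fv (f s)) MeasureTheory.volume 0 t := by
      refine ContinuousOn.intervalIntegrable ?_
      rw [huIcc]
      exact hgc.mono hsubT
    have hFTC : ∫ s in (0:ℝ)..t, Fv (f s) = f t - f 0 := by
      refine intervalIntegral.integral_eq_sub_of_hasDerivAt ?_ hInt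
      intro s hs
      rw [huIcc] at hs
      exact hdAt s (hsubT hs)
    have hcoord : (f t) j - π₀ j = ∫ s in (0:ℝ)..t, (Fv (f s)) j := by
      rw [← integral_coord_comm hInt j, hFTC, lp.coeFn_sub, Pi.sub_apply, hf0c j]
    have hcongr : ∫ s in (0:ℝ)..t, (Fv (f s)) j = ∫ s in (0:ℝ)..t, Fmap L k lam (⇑(f s)) j := by
      refine intervalIntegral.integral_congr ?_
      intro s hs
      rw [huIcc] at hs
      exact Ftil_eq_of_memS hk hkL hlam (hmemS s (hsubT hs)) j
    rw [hcongr] at hcoord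
    linarith [hcoord]
  · -- uniqueness
    intro π πt hπc hπtc hπS hπtS hπeq hπteq
    have h0T : (0:ℝ) ∈ Set.Icc (0:ℝ) T := ⟨le_rfl, hT.le⟩
    -- common construction
    have main : ∀ (p : ℝ → E1), ContinuousOn p (Set.Icc 0 T) →
        (∀ t ∈ Set.Icc (0:ℝ) T, memS (p t)) →
        (∀ t ∈ Set.Icc (0:ℝ) T, ∀ j : ℕ,
          (p t) j = π₀ j + ∫ s in (0:ℝ)..t, Fmap L k lam (p s) j) →
        ∃ ψ : ℝ → E1, (∀ u ∈ Set.Icc (0:ℝ) T, ψ u = p u) ∧ Continuous ψ ∧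
          (∀ u ∈ Set.Icc (0:ℝ) T, HasDerivAt ψ (Fv (ψ u)) u) := by
      intro p hpc hpS hpeq
      set ph : ℝ → E1 := fun s => p (↑(Set.projIcc (0:ℝ) T hT.le s)) with hph
      have hphc : Continuous ph :=
        hpc.comp_continuous (continuous_subtype_val.comp continuous_projIcc)
          (fun x => Subtype.coe_prop _)
      have hpheq : ∀ s ∈ Set.Icc (0:ℝ) T, ph s = p s := by
        intro s hs
        rw [hph]
        simp [Set.projIcc_of_mem hT.le hs]
      set g : ℝ → E1 := fun s => Fv (ph s) with hg
      have hgc : Continuous g := hlip.continuous.comp hphc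
      set ψ : ℝ → E1 := fun u => p 0 + ∫ s in (0:ℝ)..u, g s with hψ
      have hψd : ∀ u : ℝ, HasDerivAt ψ (g u) u := by
        intro u
        have h1 : HasDerivAt (fun v => ∫ s in (0:ℝ)..v, g s) (g u) u :=
          intervalIntegral.integral_hasDerivAt_right (hgc.intervalIntegrable _ _)
            (hgc.stronglyMeasurableAtFilter _ _) hgc.continuousAt
        exact h1.const_add (p 0)
      have hψeq : ∀ u ∈ Set.Icc (0:ℝ) T, ψ u = p u := by
        intro u hu
        have huIcc : Set.uIcc (0:ℝ) u = Set.Icc 0 u := Set.uIcc_of_le hu.1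
        have hsubT : Set.Icc (0:ℝ) u ⊆ Set.Icc (0:ℝ) T := Set.Icc_subset_Icc le_rfl hu.2
        apply lp.ext
        funext j
        have hInt : IntervalIntegrable g MeasureTheory.volume 0 u := hgc.intervalIntegrable _ _
        have h2 : (ψ u) j = p 0 j + ∫ s in (0:ℝ)..u, (g s) j := by
          rw [hψ]
          simp only [lp.coeFn_add, Pi.add_apply]
          rw [integral_coord_comm hInt j]
        have h3 : ∫ s in (0:ℝ)..u, (g s) j = ∫ s in (0:ℝ)..u, Fmap L k lam (⇑(p s)) j := by
          refine intervalIntegral.integral_congr ?_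
          intro s hs
          rw [huIcc] at hs
          rw [hg]
          simp only
          rw [hpheq s (hsubT hs)]
          exact Ftil_eq_of_memS hk hkL hlam (hpS s (hsubT hs)) j
        have h4 : p 0 j = π₀ j := by
          have := hpeq 0 h0T j
          simpa using this
        rw [h2, h3, h4, ← hpeq u hu j]
      refine ⟨ψ, hψeq, ?_, ?_⟩
      · exact continuous_iff_continuousAt.2 fun u => (hψd u).continuousAt
      · intro u hu
        have := hψd u
        rw [hg] at this
        simp only at this
        rw [hpheq u hu, ← hψeq u hu] at this
        exact this
    obtain ⟨ψ, hψeq, hψc, hψd⟩ := main π hπc hπS hπeq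
    obtain ⟨ψt, hψteq, hψtc, hψtd⟩ := main πt hπtc hπtS hπteq
    have hveq : ∀ t : ℝ, LipschitzOnWith (Real.toNNReal (2 * CF L k lam))
        ((fun _ (x : E1) => Fv x) t) (Set.univ) := fun t => hlip.lipschitzOnWith
    have h00 : ψ 0 = ψt 0 := by
      rw [hψeq 0 h0T, hψteq 0 h0T]
      apply lp.ext
      funext j
      have h1 := hπeq 0 h0T j
      have h2 := hπteq 0 h0T j
      simp only [intervalIntegral.integral_same] at h1 h2
      rw [h1, h2]
    have huniq := ODE_solution_unique_of_mem_Icc_right (fun t _ => hveq t)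
      (hψc.continuousOn) (fun t ht => (hψd t ⟨ht.1, ht.2.le⟩).hasDerivWithinAt)
      (fun t _ => Set.mem_univ _)
      (hψtc.continuousOn) (fun t ht => (hψtd t ⟨ht.1, ht.2.le⟩).hasDerivWithinAt)
      (fun t _ => Set.mem_univ _) h00
    intro t ht
    rw [← hψeq t ht, ← hψteq t ht]
    exact huniq ht

end Assembly

/-- existence and uniqueness, in `C([0,T] : 𝒮)` with `𝒮 ⊂ ℓ¹`, of solutions of
the integral equation `π(t) = π₀ + ∫₀^t F(π(s)) ds` (coordinatewise Bochner integrals). -/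
theorem ode_exists_unique (L k : ℕ) (hL : 1 ≤ L) (hk : 1 ≤ k) (hkL : k ≤ L)
    (lam : ℝ) (hlam : 0 < lam) (T : ℝ) (hT : 0 < T) (π₀ : ℕ → ℝ) (hπ₀ : memS π₀) :
    (∃ π : ℝ → lp (fun _ : ℕ => ℝ) 1,
      ContinuousOn π (Set.Icc 0 T) ∧
      (∀ t ∈ Set.Icc (0:ℝ) T, memS (π t)) ∧
      (∀ t ∈ Set.Icc (0:ℝ) T, ∀ j : ℕ,
        (π t) j = π₀ j + ∫ s in (0:ℝ)..t, Fmap L k lam (π s) j)) ∧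
    (∀ π πt : ℝ → lp (fun _ : ℕ => ℝ) 1,
      ContinuousOn π (Set.Icc 0 T) → ContinuousOn πt (Set.Icc 0 T) →
      (∀ t ∈ Set.Icc (0:ℝ) T, memS (π t)) → (∀ t ∈ Set.Icc (0:ℝ) T, memS (πt t)) →
      (∀ t ∈ Set.Icc (0:ℝ) T, ∀ j : ℕ,
        (π t) j = π₀ j + ∫ s in (0:ℝ)..t, Fmap L k lam (π s) j) →
      (∀ t ∈ Set.Icc (0:ℝ) T, ∀ j : ℕ,
        (πt t) j = π₀ j + ∫ s in (0:ℝ)..t, Fmap L k lam (πt s) j) →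
      ∀ t ∈ Set.Icc (0:ℝ) T, π t = πt t) :=
  ode_exists_unique' hL hk hkL hlam T hT π₀ hπ₀
end
end

section
/- For every M ∈ (0,∞) there exists a constant κ(M) ∈ (0,∞) such that for all r ∈ 𝒱_M and all x, x̃ ∈ ℓ̃₂, Σ_{j=0}^∞ ( ξ¹_j(x,r) − ξ¹_j(x̃,r) )² ≤ κ(M) · ‖x − x̃‖₂². -/
noncomputable section

open scoped BigOperators

/-- Membership in `ℓ̃₂ = {x ∈ ℓ² : Σ_j j²x_j² < ∞, Σ_j x_j = 0}`. -/
def memLtwoTilde (x : ℕ → ℝ) : Prop :=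
  Summable (fun j => (x j) ^ 2) ∧ Summable (fun j : ℕ => (j : ℝ) ^ 2 * (x j) ^ 2) ∧
    (∑' j, x j) = 0

/-- `ξ¹_j(x,r)`. -/
def xi1 (L k : ℕ) (j : ℕ) (x r : ℕ → ℝ) : ℝ :=
  (∑ i₁ ∈ Finset.range k, (i₁ : ℝ) *
      ((∑ m ∈ Finset.range j, r m) ^ (i₁ - 1) / (i₁.factorial : ℝ)) *
      ∑ i₂ ∈ Finset.Icc 1 (L - i₁),
        (min i₂ (k - i₁) : ℝ) * (r j ^ i₂ / (i₂.factorial : ℝ)) *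
          ((tsumTail r j) ^ (L - i₁ - i₂) / ((L - i₁ - i₂).factorial : ℝ))) *
    (∑ m ∈ Finset.range j, x m)

/-- `ξ²_j(x,r)`. -/
def xi2 (L k : ℕ) (j : ℕ) (x r : ℕ → ℝ) : ℝ :=
  (∑ i₁ ∈ Finset.range k,
      ((∑ m ∈ Finset.range j, r m) ^ i₁ / (i₁.factorial : ℝ)) *
      ∑ i₂ ∈ Finset.Icc 1 (L - i₁),
        (i₂ : ℝ) * (min i₂ (k - i₁) : ℝ) * (r j ^ (i₂ - 1) / (i₂.factorial : ℝ)) *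
          ((tsumTail r j) ^ (L - i₁ - i₂) / ((L - i₁ - i₂).factorial : ℝ))) * x j

/-- `ξ³_j(x,r)`. -/
def xi3 (L k : ℕ) (j : ℕ) (x r : ℕ → ℝ) : ℝ :=
  (∑ i₁ ∈ Finset.range k,
      ((∑ m ∈ Finset.range j, r m) ^ i₁ / (i₁.factorial : ℝ)) *
      ∑ i₂ ∈ Finset.Icc 1 (L - i₁),
        ((L - i₁ - i₂ : ℕ) : ℝ) * (min i₂ (k - i₁) : ℝ) * (r j ^ i₂ / (i₂.factorial : ℝ)) *
          ((tsumTail r j) ^ (L - i₁ - i₂ - 1) / ((L - i₁ - i₂).factorial : ℝ))) *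
    (tsumTail x j)

/-- `ξ⁴_j(x) = x_{j+1} − x_j` for `j ≥ 1`, `ξ⁴_0(x) = x_1`. -/
def xi4 (x : ℕ → ℝ) : ℕ → ℝ
  | 0 => x 1
  | (j + 1) => x (j + 2) - x (j + 1)

/-- `G_j(x,r) = λ·L!·(ξ¹_{j−1} − ξ¹_j + ξ²_{j−1} − ξ²_j + ξ³_{j−1} − ξ³_j) + k·ξ⁴_j`,
with the convention `ξ¹_{−1} = ξ²_{−1} = ξ³_{−1} = 0`. -/
def Gmap (L k : ℕ) (lam : ℝ) (x r : ℕ → ℝ) : ℕ → ℝ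
  | 0 => lam * (L.factorial : ℝ) * (-(xi1 L k 0 x r) - xi2 L k 0 x r - xi3 L k 0 x r)
      + (k : ℝ) * xi4 x 0
  | (j + 1) => lam * (L.factorial : ℝ) *
      (xi1 L k j x r - xi1 L k (j + 1) x r + xi2 L k j x r - xi2 L k (j + 1) x r
        + xi3 L k j x r - xi3 L k (j + 1) x r) + (k : ℝ) * xi4 x (j + 1)

/-- Membership in `𝒱_M = {r ∈ 𝒮 : Σ_i i·r_i ≤ M}`. -/
def memV (M : ℝ) (r : ℕ → ℝ) : Prop :=
  memS r ∧ Summable (fun i : ℕ => (i : ℝ) * r i) ∧ (∑' i : ℕ, (i : ℝ) * r i) ≤ M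

set_option maxHeartbeats 1000000 in
/-- for every `M ∈ (0,∞)` there is `κ(M) ∈ (0,∞)` such that for all
`r ∈ 𝒱_M` and `x, x̃ ∈ ℓ̃₂`, `Σ_j (ξ¹_j(x,r) − ξ¹_j(x̃,r))² ≤ κ(M)‖x − x̃‖₂²`. -/
theorem xi1_lipschitz (L k : ℕ) (hL : 1 ≤ L) (hk : 1 ≤ k) (hkL : k ≤ L)
    (M : ℝ) (hM : 0 < M) :
    ∃ κ : ℝ, 0 < κ ∧ ∀ r x xt : ℕ → ℝ, memV M r → memLtwoTilde x → memLtwoTilde xt →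
      (∑' j, (xi1 L k j x r - xi1 L k j xt r) ^ 2) ≤ κ * ∑' j, (x j - xt j) ^ 2 := by
  have hk0 : (0:ℝ) < k := by exact_mod_cast hk
  have hL0 : (0:ℝ) < L := by exact_mod_cast hL
  refine ⟨((k:ℝ)*L)^2 * M, by positivity, ?_⟩
  intro r x xt hr hx hxt
  obtain ⟨⟨hrpos, hrsum, hrtot⟩, hjr, hjrM⟩ := hr
  set y : ℕ → ℝ := fun j => x j - xt j with hy
  -- summability of y²
  have hYsum : Summable (fun j => y j ^ 2) := by
    refine Summable.of_nonneg_of_le (fun j => sq_nonneg _) (fun j => ?_)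
      ((hx.1.mul_left 2).add (hxt.1.mul_left 2))
    simp only [hy]; nlinarith [sq_nonneg (x j + xt j)]
  set Y : ℝ := ∑' j, y j ^ 2 with hYdef
  have hY0 : 0 ≤ Y := tsum_nonneg fun j => sq_nonneg _
  -- bounds on r
  have hr1 : ∀ j, r j ≤ 1 := by
    intro j
    rw [← hrtot]
    exact Summable.le_tsum hrsum j (fun i _ => hrpos i)
  have hP0 : ∀ j, 0 ≤ ∑ m ∈ Finset.range j, r m := fun j =>
    Finset.sum_nonneg fun m _ => hrpos m
  have hP1 : ∀ j, ∑ m ∈ Finset.range j, r m ≤ 1 := by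
    intro j; rw [← hrtot]
    exact Summable.sum_le_tsum _ (fun i _ => hrpos i) hrsum
  have hT0 : ∀ j, 0 ≤ tsumTail r j := fun j => tsum_nonneg fun m => hrpos _
  have hT1 : ∀ j, tsumTail r j ≤ 1 := by
    intro j
    rw [← hrtot]
    refine Summable.tsum_le_tsum_of_inj (fun m => j + 1 + m) (fun a b h => by simpa using h)
      (fun c _ => hrpos c) (fun m => le_rfl) ?_ hrsum
    exact (summable_nat_add_iff (j+1)).2 hrsum |>.congr (fun m => by ring_nf)
  -- the coefficient
  set A : ℕ → ℝ := fun j =>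
    ∑ i₁ ∈ Finset.range k, (i₁ : ℝ) *
      ((∑ m ∈ Finset.range j, r m) ^ (i₁ - 1) / (i₁.factorial : ℝ)) *
      ∑ i₂ ∈ Finset.Icc 1 (L - i₁),
        (min i₂ (k - i₁) : ℝ) * (r j ^ i₂ / (i₂.factorial : ℝ)) *
          ((tsumTail r j) ^ (L - i₁ - i₂) / ((L - i₁ - i₂).factorial : ℝ)) with hA
  have hdiff : ∀ j, xi1 L k j x r - xi1 L k j xt r = A j * ∑ m ∈ Finset.range j, y m := by
    intro j
    simp only [xi1, hA, hy, ← mul_sub, ← Finset.sum_sub_distrib]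
  -- bounds on A
  have hmin0 : ∀ i₁ i₂ : ℕ, i₁ < k → (0:ℝ) ≤ (min i₂ (k - i₁) : ℝ) := by
    intro i₁ i₂ h
    have : ((i₁:ℝ)) ≤ k := by exact_mod_cast h.le
    simp only [le_min_iff]
    constructor
    · positivity
    · linarith
  have hterm_nonneg : ∀ (j : ℕ), ∀ i₁ ∈ Finset.range k, 0 ≤ (i₁ : ℝ) *
      ((∑ m ∈ Finset.range j, r m) ^ (i₁ - 1) / (i₁.factorial : ℝ)) *
      ∑ i₂ ∈ Finset.Icc 1 (L - i₁),
        (min i₂ (k - i₁) : ℝ) * (r j ^ i₂ / (i₂.factorial : ℝ)) *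
          ((tsumTail r j) ^ (L - i₁ - i₂) / ((L - i₁ - i₂).factorial : ℝ)) := by
    intro j i₁ hi₁
    rw [Finset.mem_range] at hi₁
    apply mul_nonneg
    · have := hP0 j; positivity
    · apply Finset.sum_nonneg
      intro i₂ _
      apply mul_nonneg (mul_nonneg (hmin0 i₁ i₂ hi₁) ?_) ?_
      · have := hrpos j; positivity
      · have := hT0 j; positivity
  have hA0 : ∀ j, 0 ≤ A j := fun j => Finset.sum_nonneg (hterm_nonneg j)
  have hAle : ∀ j, A j ≤ (k:ℝ) * L * r j := by
    intro j
    have hstep : ∀ i₁ ∈ Finset.range k, (i₁ : ℝ) *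
        ((∑ m ∈ Finset.range j, r m) ^ (i₁ - 1) / (i₁.factorial : ℝ)) *
        (∑ i₂ ∈ Finset.Icc 1 (L - i₁),
          (min i₂ (k - i₁) : ℝ) * (r j ^ i₂ / (i₂.factorial : ℝ)) *
            ((tsumTail r j) ^ (L - i₁ - i₂) / ((L - i₁ - i₂).factorial : ℝ)))
        ≤ (L:ℝ) * r j := by
      intro i₁ hi₁
      rw [Finset.mem_range] at hi₁
      have hfac1 : (0:ℝ) < i₁.factorial := by positivity
      have houter : (i₁ : ℝ) * ((∑ m ∈ Finset.range j, r m) ^ (i₁ - 1) / (i₁.factorial : ℝ))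
          ≤ 1 := by
        have h1 : (∑ m ∈ Finset.range j, r m) ^ (i₁ - 1) ≤ 1 :=
          pow_le_one₀ (hP0 j) (hP1 j)
        calc (i₁ : ℝ) * ((∑ m ∈ Finset.range j, r m) ^ (i₁ - 1) / (i₁.factorial : ℝ))
            ≤ (i₁ : ℝ) * (1 / (i₁.factorial : ℝ)) := by
              gcongr
          _ = (i₁ : ℝ) / (i₁.factorial : ℝ) := by ring
          _ ≤ 1 := by
              rw [div_le_one hfac1]
              exact_mod_cast Nat.self_le_factorial i₁
      have houter0 : 0 ≤ (i₁ : ℝ) *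
          ((∑ m ∈ Finset.range j, r m) ^ (i₁ - 1) / (i₁.factorial : ℝ)) := by
        have := hP0 j; positivity
      have hinner : (∑ i₂ ∈ Finset.Icc 1 (L - i₁),
          (min i₂ (k - i₁) : ℝ) * (r j ^ i₂ / (i₂.factorial : ℝ)) *
            ((tsumTail r j) ^ (L - i₁ - i₂) / ((L - i₁ - i₂).factorial : ℝ)))
          ≤ (L:ℝ) * r j := by
        have hbd : ∀ i₂ ∈ Finset.Icc 1 (L - i₁),
            (min i₂ (k - i₁) : ℝ) * (r j ^ i₂ / (i₂.factorial : ℝ)) *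
              ((tsumTail r j) ^ (L - i₁ - i₂) / ((L - i₁ - i₂).factorial : ℝ)) ≤ r j := by
          intro i₂ hi₂
          simp only [Finset.mem_Icc] at hi₂
          have hfac2 : (0:ℝ) < i₂.factorial := by positivity
          have h1 : (min i₂ (k - i₁) : ℝ) / (i₂.factorial : ℝ) ≤ 1 := by
            rw [div_le_one hfac2]
            calc (min i₂ (k - i₁) : ℝ) ≤ (i₂ : ℝ) := min_le_left _ _
              _ ≤ (i₂.factorial : ℝ) := by exact_mod_cast Nat.self_le_factorial i₂
          have h1' : 0 ≤ (min i₂ (k - i₁) : ℝ) / (i₂.factorial : ℝ) :=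
            div_nonneg (hmin0 i₁ i₂ hi₁) hfac2.le
          have h2 : r j ^ i₂ ≤ r j :=
            pow_le_of_le_one (hrpos j) (hr1 j) (by omega)
          have h3 : (tsumTail r j) ^ (L - i₁ - i₂) / ((L - i₁ - i₂).factorial : ℝ) ≤ 1 := by
            rw [div_le_one (by positivity)]
            calc (tsumTail r j) ^ (L - i₁ - i₂) ≤ 1 := pow_le_one₀ (hT0 j) (hT1 j)
              _ ≤ ((L - i₁ - i₂).factorial : ℝ) := by
                  exact_mod_cast Nat.one_le_iff_ne_zero.2 (L - i₁ - i₂).factorial_ne_zero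
          have h30 : 0 ≤ (tsumTail r j) ^ (L - i₁ - i₂) / ((L - i₁ - i₂).factorial : ℝ) := by
            have := hT0 j; positivity
          calc (min i₂ (k - i₁) : ℝ) * (r j ^ i₂ / (i₂.factorial : ℝ)) *
                ((tsumTail r j) ^ (L - i₁ - i₂) / ((L - i₁ - i₂).factorial : ℝ))
              = ((min i₂ (k - i₁) : ℝ) / (i₂.factorial : ℝ)) * r j ^ i₂ *
                ((tsumTail r j) ^ (L - i₁ - i₂) / ((L - i₁ - i₂).factorial : ℝ)) := by ring
            _ ≤ 1 * r j * 1 := by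
                apply mul_le_mul (mul_le_mul h1 h2 (pow_nonneg (hrpos j) _) one_pos.le) h3 h30
                have := hrpos j; positivity
            _ = r j := by ring
        calc (∑ i₂ ∈ Finset.Icc 1 (L - i₁),
            (min i₂ (k - i₁) : ℝ) * (r j ^ i₂ / (i₂.factorial : ℝ)) *
              ((tsumTail r j) ^ (L - i₁ - i₂) / ((L - i₁ - i₂).factorial : ℝ)))
            ≤ ∑ _i₂ ∈ Finset.Icc 1 (L - i₁), r j := Finset.sum_le_sum hbd
          _ = ((L - i₁ : ℕ) : ℝ) * r j := by
              rw [Finset.sum_const, Nat.card_Icc]; simp [nsmul_eq_mul]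
          _ ≤ (L:ℝ) * r j := by
              apply mul_le_mul_of_nonneg_right _ (hrpos j)
              exact_mod_cast Nat.sub_le L i₁
      have hinner0 : 0 ≤ (∑ i₂ ∈ Finset.Icc 1 (L - i₁),
          (min i₂ (k - i₁) : ℝ) * (r j ^ i₂ / (i₂.factorial : ℝ)) *
            ((tsumTail r j) ^ (L - i₁ - i₂) / ((L - i₁ - i₂).factorial : ℝ))) := by
        apply Finset.sum_nonneg; intro i₂ _
        apply mul_nonneg (mul_nonneg (hmin0 i₁ i₂ hi₁) ?_) ?_
        · have := hrpos j; positivity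
        · have := hT0 j; positivity
      calc _ ≤ 1 * ((L:ℝ) * r j) := by
            apply mul_le_mul houter hinner hinner0 one_pos.le
        _ = (L:ℝ) * r j := by ring
    calc A j ≤ ∑ _i₁ ∈ Finset.range k, (L:ℝ) * r j := Finset.sum_le_sum hstep
      _ = (k:ℝ) * ((L:ℝ) * r j) := by rw [Finset.sum_const]; simp [nsmul_eq_mul]
      _ = (k:ℝ) * L * r j := by ring
  -- partial-sum bound
  have hS : ∀ j, (∑ m ∈ Finset.range j, y m) ^ 2 ≤ (j : ℝ) * Y := by
    intro j
    calc (∑ m ∈ Finset.range j, y m) ^ 2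
        ≤ (Finset.range j).card * ∑ m ∈ Finset.range j, y m ^ 2 :=
          sq_sum_le_card_mul_sum_sq
      _ ≤ (j : ℝ) * Y := by
          rw [Finset.card_range]
          apply mul_le_mul_of_nonneg_left _ (Nat.cast_nonneg j)
          exact Summable.sum_le_tsum _ (fun i _ => sq_nonneg _) hYsum
  -- termwise bound
  set g : ℕ → ℝ := fun j => ((k:ℝ)*L)^2 * Y * ((j:ℝ) * r j) with hg
  have hterm : ∀ j, (xi1 L k j x r - xi1 L k j xt r) ^ 2 ≤ g j := by
    intro j
    rw [hdiff j, mul_pow]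
    have hA2 : (A j) ^ 2 ≤ ((k:ℝ)*L)^2 * r j ^ 2 := by
      rw [← mul_pow]
      exact pow_le_pow_left₀ (hA0 j) (by simpa [mul_assoc] using hAle j) 2
    calc A j ^ 2 * (∑ m ∈ Finset.range j, y m) ^ 2
        ≤ (((k:ℝ)*L)^2 * r j ^ 2) * ((j : ℝ) * Y) := by
          apply mul_le_mul hA2 (hS j) (sq_nonneg _) (by positivity)
      _ ≤ (((k:ℝ)*L)^2 * r j) * ((j : ℝ) * Y) := by
          apply mul_le_mul_of_nonneg_right _ (by positivity)
          apply mul_le_mul_of_nonneg_left _ (by positivity)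
          nlinarith [hr1 j, hrpos j]
      _ = g j := by simp only [hg]; ring
  have hgsum : Summable g := (hjr.mul_left _)
  have hfsum : Summable (fun j => (xi1 L k j x r - xi1 L k j xt r) ^ 2) :=
    Summable.of_nonneg_of_le (fun j => sq_nonneg _) hterm hgsum
  calc (∑' j, (xi1 L k j x r - xi1 L k j xt r) ^ 2)
      ≤ ∑' j, g j := Summable.tsum_le_tsum hterm hfsum hgsum
    _ = ((k:ℝ)*L)^2 * Y * ∑' j : ℕ, (j:ℝ) * r j := by rw [tsum_mul_left]
    _ ≤ ((k:ℝ)*L)^2 * Y * M := by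
        apply mul_le_mul_of_nonneg_left hjrM (by positivity)
    _ = ((k:ℝ)*L)^2 * M * Y := by ring
end
end

section
/- For every M ∈ (0,∞) there exists a constant κ(M) ∈ (0,∞) such that for all r ∈ 𝒱_M and all x, x̃ ∈ ℓ̃₂, Σ_{j=0}^∞ ( ξ³_j(x,r) − ξ³_j(x̃,r) )² ≤ κ(M) · ‖x − x̃‖₂². (The proof uses that Σ_{m=0}^∞ x_m = Σ_{m=0}^∞ x̃_m = 0, so that the tail sums Σ_{m=j+1}^∞ x_m equal −Σ_{m=0}^j x_m.) -/
noncomputable section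

open scoped BigOperators

-- tail formula
lemma tsumTail_eq (x : ℕ → ℝ) (hx : Summable x) (j : ℕ) :
    tsumTail x j = (∑' m, x m) - ∑ m ∈ Finset.range (j+1), x m := by
  have h1 : tsumTail x j = ∑' m, x (m + (j+1)) :=
    tsum_congr (fun m => by rw [Nat.add_comm])
  have h2 := Summable.sum_add_tsum_nat_add (f := x) (j+1) hx
  rw [h1]; linarith

-- summability of x from ℓ̃₂ conditions
lemma summable_of_sq (x : ℕ → ℝ) (h2 : Summable (fun j : ℕ => (j : ℝ) ^ 2 * (x j) ^ 2)) :
    Summable x := by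
  rw [← summable_nat_add_iff 1]
  apply Summable.of_norm
  have hb : Summable (fun n : ℕ => ((1 / ((n:ℝ)+1) ^ 2) + ((n:ℝ)+1) ^ 2 * (x (n+1)) ^ 2) / 2) := by
    apply Summable.div_const
    apply Summable.add
    · have h0 : Summable (fun n : ℕ => 1 / ((n:ℝ)) ^ 2) :=
        Real.summable_one_div_nat_pow.mpr one_lt_two
      have h1 := (summable_nat_add_iff 1).mpr h0
      exact h1.congr (fun n => by push_cast; ring_nf)
    · have := (summable_nat_add_iff 1).mpr h2
      exact this.congr (fun n => by push_cast; ring_nf)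
  apply Summable.of_nonneg_of_le (fun n => norm_nonneg _) _ hb
  intro n
  have hn : (0:ℝ) < (n:ℝ)+1 := by positivity
  have key : |x (n+1)| = (1/((n:ℝ)+1)) * (((n:ℝ)+1) * |x (n+1)|) := by
    field_simp
  have h1 : (1/((n:ℝ)+1)) * (((n:ℝ)+1)*|x (n+1)|) ≤
      ((1/((n:ℝ)+1))^2 + (((n:ℝ)+1)*|x (n+1)|)^2)/2 := by
    nlinarith [sq_nonneg (1/((n:ℝ)+1) - ((n:ℝ)+1)*|x (n+1)|)]
  have h2 : ((1/((n:ℝ)+1)))^2 = 1/((n:ℝ)+1)^2 := by rw [div_pow]; norm_num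
  have h3 : (((n:ℝ)+1)*|x (n+1)|)^2 = ((n:ℝ)+1)^2 * (x (n+1))^2 := by
    rw [mul_pow, sq_abs]
  rw [Real.norm_eq_abs, key]
  rw [h2, h3] at h1
  linarith

def xi3c (L k : ℕ) (j : ℕ) (r : ℕ → ℝ) : ℝ :=
  ∑ i₁ ∈ Finset.range k,
      ((∑ m ∈ Finset.range j, r m) ^ i₁ / (i₁.factorial : ℝ)) *
      ∑ i₂ ∈ Finset.Icc 1 (L - i₁),
        ((L - i₁ - i₂ : ℕ) : ℝ) * (min i₂ (k - i₁) : ℝ) * (r j ^ i₂ / (i₂.factorial : ℝ)) *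
          ((tsumTail r j) ^ (L - i₁ - i₂ - 1) / ((L - i₁ - i₂).factorial : ℝ))

lemma basic_bounds (r : ℕ → ℝ) (hr : memS r) (j : ℕ) :
    0 ≤ r j ∧ r j ≤ 1 ∧ 0 ≤ ∑ m ∈ Finset.range j, r m ∧ (∑ m ∈ Finset.range j, r m) ≤ 1 ∧
      0 ≤ tsumTail r j ∧ tsumTail r j ≤ 1 := by
  obtain ⟨hr0, hsum, htot⟩ := hr
  have hP0 : 0 ≤ ∑ m ∈ Finset.range j, r m := Finset.sum_nonneg (fun i _ => hr0 i)
  have hP1 : (∑ m ∈ Finset.range j, r m) ≤ 1 := by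
    rw [← htot]; exact Summable.sum_le_tsum _ (fun i _ => hr0 i) hsum
  have hT : tsumTail r j = 1 - ∑ m ∈ Finset.range (j+1), r m := by
    have h1 : tsumTail r j = ∑' m, r (m + (j+1)) :=
      tsum_congr (fun m => by rw [Nat.add_comm])
    have h2 := Summable.sum_add_tsum_nat_add (f := r) (j+1) hsum
    rw [h1]; rw [htot] at h2; linarith
  have hP1' : (∑ m ∈ Finset.range (j+1), r m) ≤ 1 := by
    rw [← htot]; exact Summable.sum_le_tsum _ (fun i _ => hr0 i) hsum
  have hP0' : 0 ≤ ∑ m ∈ Finset.range (j+1), r m := Finset.sum_nonneg (fun i _ => hr0 i)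
  refine ⟨hr0 j, ?_, hP0, hP1, by rw [hT]; linarith, by rw [hT]; linarith⟩
  rw [← htot]; exact Summable.le_tsum hsum j (fun i _ => hr0 i)

lemma xi3c_nonneg (L k : ℕ) (r : ℕ → ℝ) (hr : memS r) (j : ℕ) : 0 ≤ xi3c L k j r := by
  obtain ⟨h1, h2, h3, h4, h5, h6⟩ := basic_bounds r hr j
  unfold xi3c
  apply Finset.sum_nonneg; intro i₁ hi₁
  rw [Finset.mem_range] at hi₁
  apply mul_nonneg (by positivity)
  apply Finset.sum_nonneg; intro i₂ hi₂
  rw [Finset.mem_Icc] at hi₂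
  have hm0 : (0:ℝ) ≤ min (i₂:ℝ) ((k:ℝ) - (i₁:ℝ)) :=
    le_min (by positivity) (by rw [sub_nonneg]; exact_mod_cast Nat.cast_le.mpr (by omega))
  exact mul_nonneg (mul_nonneg (mul_nonneg (Nat.cast_nonneg _) hm0) (by positivity))
    (by positivity)

lemma xi3c_le (L k : ℕ) (hk : 1 ≤ k) (hkL : k ≤ L) (r : ℕ → ℝ) (hr : memS r) (j : ℕ) :
    xi3c L k j r ≤ (L:ℝ)^4 * r j := by
  obtain ⟨h1, h2, h3, h4, h5, h6⟩ := basic_bounds r hr j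
  unfold xi3c
  have hterm : ∀ i₁ ∈ Finset.range k,
      ((∑ m ∈ Finset.range j, r m) ^ i₁ / (i₁.factorial : ℝ)) *
      (∑ i₂ ∈ Finset.Icc 1 (L - i₁),
        ((L - i₁ - i₂ : ℕ) : ℝ) * (min i₂ (k - i₁) : ℝ) * (r j ^ i₂ / (i₂.factorial : ℝ)) *
          ((tsumTail r j) ^ (L - i₁ - i₂ - 1) / ((L - i₁ - i₂).factorial : ℝ)))
      ≤ (L:ℝ)^3 * r j := by
    intro i₁ hi₁
    rw [Finset.mem_range] at hi₁
    have hinner : (∑ i₂ ∈ Finset.Icc 1 (L - i₁),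
        ((L - i₁ - i₂ : ℕ) : ℝ) * (min i₂ (k - i₁) : ℝ) * (r j ^ i₂ / (i₂.factorial : ℝ)) *
          ((tsumTail r j) ^ (L - i₁ - i₂ - 1) / ((L - i₁ - i₂).factorial : ℝ)))
        ≤ (L:ℝ)^3 * r j := by
      have hb : ∀ i₂ ∈ Finset.Icc 1 (L - i₁),
          ((L - i₁ - i₂ : ℕ) : ℝ) * (min i₂ (k - i₁) : ℝ) * (r j ^ i₂ / (i₂.factorial : ℝ)) *
            ((tsumTail r j) ^ (L - i₁ - i₂ - 1) / ((L - i₁ - i₂).factorial : ℝ))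
          ≤ (L:ℝ) * (L:ℝ) * r j * 1 := by
        intro i₂ hi₂
        rw [Finset.mem_Icc] at hi₂
        have hm : min (i₂:ℝ) ((k:ℝ) - (i₁:ℝ)) ≤ (L:ℝ) :=
          (min_le_left _ _).trans (Nat.cast_le.mpr (by omega))
        have hm0 : (0:ℝ) ≤ min (i₂:ℝ) ((k:ℝ) - (i₁:ℝ)) :=
          le_min (by positivity) (by rw [sub_nonneg]; exact_mod_cast Nat.cast_le.mpr (by omega))
        have hc : ((L - i₁ - i₂ : ℕ) : ℝ) ≤ (L:ℝ) := Nat.cast_le.mpr (by omega)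
        have hrp : r j ^ i₂ / (i₂.factorial : ℝ) ≤ r j := by
          have : r j ^ i₂ ≤ r j := pow_le_of_le_one h1 h2 (by omega)
          calc r j ^ i₂ / (i₂.factorial : ℝ) ≤ r j ^ i₂ / 1 := by
                apply div_le_div_of_nonneg_left ?_ ?_ ?_ |>.trans_eq rfl
                · positivity
                · norm_num
                · exact_mod_cast i₂.factorial_pos
            _ ≤ r j := by rw [div_one]; exact this
        have htp : (tsumTail r j) ^ (L - i₁ - i₂ - 1) / ((L - i₁ - i₂).factorial : ℝ) ≤ 1 := by
          have hp1 : (tsumTail r j) ^ (L - i₁ - i₂ - 1) ≤ 1 := pow_le_one₀ h5 h6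
          calc _ ≤ (tsumTail r j) ^ (L - i₁ - i₂ - 1) / 1 := by
                apply div_le_div_of_nonneg_left ?_ ?_ ?_ |>.trans_eq rfl
                · positivity
                · norm_num
                · exact_mod_cast (L - i₁ - i₂).factorial_pos
            _ ≤ 1 := by rw [div_one]; exact hp1
        have hc0 : (0:ℝ) ≤ ((L - i₁ - i₂ : ℕ) : ℝ) := Nat.cast_nonneg _
        gcongr <;> positivity
      calc _ ≤ (Finset.Icc 1 (L - i₁)).card • ((L:ℝ) * (L:ℝ) * r j * 1) :=
            Finset.sum_le_card_nsmul _ _ _ hb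
        _ ≤ (L:ℝ)^3 * r j := by
            rw [nsmul_eq_mul, Nat.card_Icc]
            have hle : ((L - i₁ + 1 - 1 : ℕ):ℝ) ≤ (L:ℝ) := Nat.cast_le.mpr (by omega)
            have h0 : (0:ℝ) ≤ (L:ℝ) * (L:ℝ) * r j * 1 :=
              mul_nonneg (mul_nonneg (mul_nonneg (Nat.cast_nonneg _) (Nat.cast_nonneg _)) h1)
                zero_le_one
            have hmm := mul_le_mul_of_nonneg_right hle h0
            have heq : (L:ℝ) * ((L:ℝ) * (L:ℝ) * r j * 1) = (L:ℝ)^3 * r j := by ring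
            linarith
    have hP : ((∑ m ∈ Finset.range j, r m) ^ i₁ / (i₁.factorial : ℝ)) ≤ 1 := by
      have : (∑ m ∈ Finset.range j, r m) ^ i₁ ≤ 1 := pow_le_one₀ h3 h4
      calc _ ≤ (∑ m ∈ Finset.range j, r m) ^ i₁ / 1 := by
            apply div_le_div_of_nonneg_left ?_ ?_ ?_ |>.trans_eq rfl
            · positivity
            · norm_num
            · exact_mod_cast i₁.factorial_pos
        _ ≤ 1 := by rw [div_one]; exact this
    have hin0 : 0 ≤ ∑ i₂ ∈ Finset.Icc 1 (L - i₁),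
        ((L - i₁ - i₂ : ℕ) : ℝ) * (min i₂ (k - i₁) : ℝ) * (r j ^ i₂ / (i₂.factorial : ℝ)) *
          ((tsumTail r j) ^ (L - i₁ - i₂ - 1) / ((L - i₁ - i₂).factorial : ℝ)) := by
      apply Finset.sum_nonneg; intro i₂ hi₂
      rw [Finset.mem_Icc] at hi₂
      have hm0 : (0:ℝ) ≤ min (i₂:ℝ) ((k:ℝ) - (i₁:ℝ)) :=
        le_min (by positivity) (by rw [sub_nonneg]; exact_mod_cast Nat.cast_le.mpr (by omega))
      exact mul_nonneg (mul_nonneg (mul_nonneg (Nat.cast_nonneg _) hm0) (by positivity))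
        (by positivity)
    calc _ ≤ 1 * ((L:ℝ)^3 * r j) := by
          apply mul_le_mul hP hinner hin0 (by norm_num)
      _ = (L:ℝ)^3 * r j := by ring
  calc _ ≤ ∑ _i₁ ∈ Finset.range k, (L:ℝ)^3 * r j := Finset.sum_le_sum hterm
    _ = (k:ℝ) * ((L:ℝ)^3 * r j) := by rw [Finset.sum_const, Finset.card_range, nsmul_eq_mul]
    _ ≤ (L:ℝ)^4 * r j := by
        have hle : (k:ℝ) ≤ (L:ℝ) := Nat.cast_le.mpr hkL
        have h0 : (0:ℝ) ≤ (L:ℝ)^3 * r j := mul_nonneg (by positivity) h1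
        have hmm := mul_le_mul_of_nonneg_right hle h0
        have heq : (L:ℝ) * ((L:ℝ)^3 * r j) = (L:ℝ)^4 * r j := by ring
        linarith

lemma xi3_eq_coef (L k j : ℕ) (x r : ℕ → ℝ) :
    xi3 L k j x r = xi3c L k j r * tsumTail x j := by unfold xi3 xi3c; rfl

/-- for every `M ∈ (0,∞)` there is `κ(M) ∈ (0,∞)` such that for all
`r ∈ 𝒱_M` and `x, x̃ ∈ ℓ̃₂`, `Σ_j (ξ³_j(x,r) − ξ³_j(x̃,r))² ≤ κ(M)‖x − x̃‖₂²`. -/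
theorem xi3_lipschitz (L k : ℕ) (hL : 1 ≤ L) (hk : 1 ≤ k) (hkL : k ≤ L)
    (M : ℝ) (hM : 0 < M) :
    ∃ κ : ℝ, 0 < κ ∧ ∀ r x xt : ℕ → ℝ, memV M r → memLtwoTilde x → memLtwoTilde xt →
      (∑' j, (xi3 L k j x r - xi3 L k j xt r) ^ 2) ≤ κ * ∑' j, (x j - xt j) ^ 2 := by
  have hL0 : (0:ℝ) < (L:ℝ) := by exact_mod_cast hL
  refine ⟨(L:ℝ)^8 * (M+1), mul_pos (pow_pos hL0 8) (by linarith), ?_⟩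
  intro r x xt hrV hx hxt
  obtain ⟨hrS, hrsum1, hrM⟩ := hrV
  obtain ⟨hr0, hrsum, hrtot⟩ := hrS
  have hxs : Summable x := summable_of_sq x hx.2.1
  have hxts : Summable xt := summable_of_sq xt hxt.2.1
  set Y : ℝ := ∑' j, (x j - xt j) ^ 2 with hY
  have hY2 : Summable (fun j : ℕ => (x j - xt j) ^ 2) := by
    refine Summable.of_nonneg_of_le (fun j => sq_nonneg _) (fun j => ?_)
      ((hx.1.mul_left 2).add (hxt.1.mul_left 2))
    nlinarith [sq_nonneg (x j + xt j)]
  have hY0 : 0 ≤ Y := tsum_nonneg (fun j => sq_nonneg _)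
  -- pointwise bound
  have hptw : ∀ j : ℕ, (xi3 L k j x r - xi3 L k j xt r) ^ 2 ≤
      ((L:ℝ)^8 * Y) * (((j:ℝ)+1) * r j) := by
    intro j
    have htx : tsumTail x j = - ∑ m ∈ Finset.range (j+1), x m := by
      rw [tsumTail_eq x hxs j, hx.2.2]; ring
    have htxt : tsumTail xt j = - ∑ m ∈ Finset.range (j+1), xt m := by
      rw [tsumTail_eq xt hxts j, hxt.2.2]; ring
    have hdiff : xi3 L k j x r - xi3 L k j xt r =
        xi3c L k j r * (∑ m ∈ Finset.range (j+1), (xt m - x m)) := by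
      rw [xi3_eq_coef, xi3_eq_coef, htx, htxt, Finset.sum_sub_distrib]; ring
    have hC0 := xi3c_nonneg L k r ⟨hr0, hrsum, hrtot⟩ j
    have hCle := xi3c_le L k hk hkL r ⟨hr0, hrsum, hrtot⟩ j
    obtain ⟨h1, h2, _, _, _, _⟩ := basic_bounds r ⟨hr0, hrsum, hrtot⟩ j
    have hC2 : (xi3c L k j r)^2 ≤ ((L:ℝ)^4 * r j)^2 := pow_le_pow_left₀ hC0 hCle 2
    have hsq : ∀ m, (xt m - x m)^2 = (x m - xt m)^2 := fun m => by ring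
    have hS2 : (∑ m ∈ Finset.range (j+1), (xt m - x m))^2 ≤
        (((j:ℝ)+1)) * ∑ m ∈ Finset.range (j+1), (x m - xt m)^2 := by
      have := sq_sum_le_card_mul_sum_sq (s := Finset.range (j+1))
        (f := fun m => xt m - x m)
      simp only [Finset.card_range, hsq] at this
      convert this using 2
      exacts [rfl, by push_cast; ring]
    have hsle : (∑ m ∈ Finset.range (j+1), (x m - xt m)^2) ≤ Y :=
      Summable.sum_le_tsum _ (fun m _ => sq_nonneg _) hY2
    have hS2' : (∑ m ∈ Finset.range (j+1), (xt m - x m))^2 ≤ ((j:ℝ)+1) * Y := by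
      have := mul_le_mul_of_nonneg_left hsle (show (0:ℝ) ≤ (j:ℝ)+1 by positivity)
      linarith
    calc (xi3 L k j x r - xi3 L k j xt r) ^ 2
        = (xi3c L k j r)^2 * (∑ m ∈ Finset.range (j+1), (xt m - x m))^2 := by
          rw [hdiff, mul_pow]
      _ ≤ ((L:ℝ)^4 * r j)^2 * (((j:ℝ)+1) * Y) :=
          mul_le_mul hC2 hS2' (sq_nonneg _) (sq_nonneg _)
      _ = ((L:ℝ)^8 * (((j:ℝ)+1) * Y)) * (r j)^2 := by ring
      _ ≤ ((L:ℝ)^8 * (((j:ℝ)+1) * Y)) * (r j) := by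
          have hrr : (r j)^2 ≤ r j := by nlinarith
          exact mul_le_mul_of_nonneg_left hrr (by positivity)
      _ = ((L:ℝ)^8 * Y) * (((j:ℝ)+1) * r j) := by ring
  -- summability of dominating series
  have hjr : Summable (fun j : ℕ => ((j:ℝ)+1) * r j) :=
    (hrsum1.add hrsum).congr (fun j => by ring)
  have hg : Summable (fun j : ℕ => ((L:ℝ)^8 * Y) * (((j:ℝ)+1) * r j)) := hjr.mul_left _
  have hlhs : Summable (fun j : ℕ => (xi3 L k j x r - xi3 L k j xt r) ^ 2) :=
    Summable.of_nonneg_of_le (fun j => sq_nonneg _) hptw hg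
  have hT : (∑' j : ℕ, ((j:ℝ)+1) * r j) ≤ M + 1 := by
    have heq : (∑' j : ℕ, ((j:ℝ)+1) * r j) = (∑' j : ℕ, (j:ℝ) * r j) + ∑' j, r j := by
      rw [← Summable.tsum_add hrsum1 hrsum]
      exact tsum_congr (fun j => by ring)
    rw [heq, hrtot]; linarith
  have hT0 : 0 ≤ ∑' j : ℕ, ((j:ℝ)+1) * r j :=
    tsum_nonneg (fun j => mul_nonneg (by positivity) (hr0 j))
  calc (∑' j, (xi3 L k j x r - xi3 L k j xt r) ^ 2)
      ≤ ∑' j : ℕ, ((L:ℝ)^8 * Y) * (((j:ℝ)+1) * r j) := Summable.tsum_le_tsum hptw hlhs hg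
    _ = ((L:ℝ)^8 * Y) * ∑' j : ℕ, ((j:ℝ)+1) * r j := tsum_mul_left
    _ ≤ ((L:ℝ)^8 * Y) * (M + 1) := by
        apply mul_le_mul_of_nonneg_left hT (by positivity)
    _ = (L:ℝ)^8 * (M+1) * Y := by ring
end
end
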